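/- arXiv:2605.08745 — 4 statements merged into one kernel-verified Lean document; each statement's English description precedes it below -/
import Mathlib

section
/- For every integer n ≥ 2 and every prime m, every ontological model of the (n,m) parity-oblivious exclusion scenario whose preparation measures satisfy the parity-class equality implied by preparation noncontextuality has POREC success probability at most 1 − (n−1)/(m·n). -/
open Finset MeasureTheory

/-!
For a guess `x` and a preparation `z` let `g x z = ∫ ∏_y ξ(x_y | y, ·) dμ_z`, the probability that
the model prepared in `z` answers every question `y` by `x_y`. The `y`-marginals of `g · z` are the
response probabilities, and for each `x` the weight `z ↦ g x z` inherits parity obliviousness from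
the preparations.

For a parity-oblivious weight `G` on `K^n`, `q = |K|`, sum `q · G{z | r·z = r·x} - G(total)` over
all masks `r`. Counting the `r` with `r·(z - x) = 0` evaluates the sum as `(q - 1) q^n G(x)`; on the
other hand only `r = 0` and the single-entry masks `a·e_y` contribute, and these see the agreement
sets `{z | z_y = x_y}`. Hence `q Σ_y G{z | z_y = x_y} = q^n G(x) + (n - 1) G(total)`. Dropping
`q^n G(x) ≥ 0` and summing over `x` bounds the total probability of answering `x_y` from below by
`(n - 1) q^(n - 1)`.
-/

theorem card_smul_sum_filter_eq_sum {α β M : Type*} [Fintype α] [Fintype β] [DecidableEq β]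
    [AddCommMonoid M] (p : α → β) (G : α → M)
    (hG : ∀ k k', ∑ z with p z = k, G z = ∑ z with p z = k', G z) (k : β) :
    Fintype.card β • ∑ z with p z = k, G z = ∑ z, G z := by
  rw [← sum_fiberwise univ p G, ← card_univ, ← sum_const]
  exact sum_congr rfl fun k' _ => hG k k'

variable {ι K : Type*} [Fintype ι] [DecidableEq ι]

section Support

variable [Zero K] [DecidableEq K]

theorem eq_single_of_filter_ne_zero_eq_singleton {r : ι → K} {y : ι}
    (hr : ({i | r i ≠ 0} : Finset ι) = {y}) : r = Pi.single y (r y) := by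
  ext i
  by_cases hi : i = y
  · subst hi
    simp
  · simp only [Pi.single_apply, hi, if_false]
    by_contra h
    exact hi (mem_singleton.mp (hr ▸ mem_filter.mpr ⟨mem_univ _, h⟩))

theorem injOn_single_filter_ne_zero [Fintype K] :
    Set.InjOn (fun p : ι × K => (Pi.single p.1 p.2 : ι → K))
      (univ ×ˢ ({a | a ≠ 0} : Finset K) : Finset (ι × K)) := by
  rintro ⟨y, a⟩ hya ⟨y', a'⟩ - h
  have ha : a ≠ 0 := by simpa using hya
  have hy := congrFun h y
  obtain rfl : y = y' := by
    by_contra hne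
    simp [hne] at hy
    exact ha hy
  simpa using hy

theorem sum_eq_add_sum_sum_single [Fintype K] {M : Type*} [AddCommMonoid M] (f : (ι → K) → M)
    (hf : ∀ r : ι → K, 2 ≤ #{i | r i ≠ 0} → f r = 0) :
    ∑ r, f r = f 0 + ∑ y : ι, ∑ a with a ≠ 0, f (Pi.single y a) := by
  set singles := (univ ×ˢ ({a | a ≠ 0} : Finset K)).image
    fun p : ι × K => (Pi.single p.1 p.2 : ι → K)
  have h0 : (0 : ι → K) ∉ singles := by
    simp [singles, funext_iff, Pi.single_apply]
  rw [← sum_subset (subset_univ (insert 0 singles)), sum_insert h0,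
    sum_image injOn_single_filter_ne_zero, sum_product]
  intro r _ hr
  refine hf r (not_lt.mp fun hlt => hr ?_)
  rcases Nat.le_one_iff_eq_zero_or_eq_one.mp (Nat.le_of_lt_succ hlt) with hcard | hcard
  · convert mem_insert_self 0 singles
    ext i
    by_contra h
    exact notMem_empty i (card_eq_zero.mp hcard ▸ mem_filter.mpr ⟨mem_univ i, h⟩)
  · obtain ⟨y, hy⟩ := card_eq_one.mp hcard
    have hry : r y ≠ 0 := by
      have hy_mem := hy.symm ▸ mem_singleton_self y
      simpa using hy_mem
    rw [eq_single_of_filter_ne_zero_eq_singleton hy]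
    exact mem_insert_of_mem (mem_image.mpr ⟨(y, r y), by simp [hry], rfl⟩)

end Support

section Marginals

variable [Fintype K] {R : Type*} [CommSemiring R]

theorem sum_prod_eq_one (p : ι → K → R) (hp : ∀ i, ∑ b, p i b = 1) :
    ∑ x : ι → K, ∏ i, p i (x i) = 1 := by
  rw [← Fintype.prod_sum]
  simp [hp]

theorem sum_filter_prod_eq [DecidableEq K] (p : ι → K → R) (hp : ∀ i, ∑ b, p i b = 1) (y : ι)
    (b : K) : ∑ x : ι → K with x y = b, ∏ i, p i (x i) = p y b := by
  have hfilter : ({x : ι → K | x y = b} : Finset (ι → K)) =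
      Fintype.piFinset (Function.update (fun _ => (univ : Finset K)) y {b}) := by
    rw [Fintype.piFinset_update_singleton_eq_filter_piFinset_eq (fun _ => univ) y (mem_univ b)]
    rfl
  rw [hfilter, ← prod_univ_sum,
    prod_eq_single y (fun i _ hi => by simp [Function.update_of_ne hi, hp]) (by simp)]
  simp

end Marginals

theorem sum_sum_sum_filter_apply_eq_comm [Fintype K] [DecidableEq K] {M : Type*}
    [AddCommMonoid M] (g : (ι → K) → (ι → K) → M) :
    ∑ x, ∑ y, ∑ z with z y = x y, g x z = ∑ z, ∑ y, ∑ x with x y = z y, g x z := by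
  simp only [sum_filter]
  rw [sum_comm]
  conv_lhs => enter [2, y]; rw [sum_comm]
  rw [sum_comm]
  simp only [eq_comm]

section Parity

variable [Field K] [Fintype K] [DecidableEq K]

theorem card_mul_card_filter_dotProduct_eq_zero {d : ι → K} (hd : d ≠ 0) :
    Fintype.card K * #{r : ι → K | r ⬝ᵥ d = 0} = Fintype.card K ^ Fintype.card ι := by
  obtain ⟨i, hi⟩ := Function.ne_iff.mp hd
  let φ : (ι → K) →+ K := AddMonoidHom.mk' (· ⬝ᵥ d) fun r s => add_dotProduct r s d
  have hφ : Function.Surjective φ := fun k =>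
    ⟨Pi.single i (k / d i), by simp [φ, single_dotProduct, div_mul_cancel₀ k hi]⟩
  have h := card_smul_sum_filter_eq_sum φ (fun _ => 1)
    (fun k k' => by simpa using AddMonoidHom.card_fiber_eq_of_mem_range φ (hφ k) (hφ k')) 0
  simp only [smul_eq_mul, sum_const, mul_one, card_univ, Fintype.card_fun] at h
  exact h

theorem card_mul_sum_sum_filter_dotProduct_eq (G : (ι → K) → ℝ) (x : ι → K) :
    (Fintype.card K : ℝ) * ∑ r : ι → K, ∑ z with r ⬝ᵥ z = r ⬝ᵥ x, G z =
      (Fintype.card K : ℝ) ^ Fintype.card ι * ∑ z, G z +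
        ((Fintype.card K : ℝ) - 1) * (Fintype.card K : ℝ) ^ Fintype.card ι * G x := by
  set q : ℝ := (Fintype.card K : ℝ) with hq
  have hcount : ∀ z, q * #{r : ι → K | r ⬝ᵥ z = r ⬝ᵥ x} =
      q ^ Fintype.card ι + if z = x then (q - 1) * q ^ Fintype.card ι else 0 := by
    intro z
    split_ifs with hz
    · simp only [hz, filter_true, card_univ, Fintype.card_pi, prod_const, Nat.cast_pow, q]
      ring
    · have h := card_mul_card_filter_dotProduct_eq_zero (sub_ne_zero.mpr hz)
      simp only [dotProduct_sub, sub_eq_zero] at h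
      rw [add_zero, hq]
      exact_mod_cast h
  calc q * ∑ r : ι → K, ∑ z with r ⬝ᵥ z = r ⬝ᵥ x, G z
      = ∑ z, q * #{r : ι → K | r ⬝ᵥ z = r ⬝ᵥ x} * G z := by
        simp only [sum_filter, mul_sum]
        rw [sum_comm]
        refine sum_congr rfl fun z _ => ?_
        simp only [mul_ite, mul_zero, sum_ite, sum_const, nsmul_eq_mul, add_zero]
        ring
    _ = _ := by
        simp only [hcount, add_mul, sum_add_distrib, ← mul_sum]
        simp

def IsParityOblivious {M : Type*} [AddCommMonoid M] (G : (ι → K) → M) : Prop :=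
  ∀ r : ι → K, 2 ≤ #{i | r i ≠ 0} → ∀ k k' : K,
    ∑ z with r ⬝ᵥ z = k, G z = ∑ z with r ⬝ᵥ z = k', G z

theorem IsParityOblivious.card_mul_sum_sum_filter_apply_eq {G : (ι → K) → ℝ}
    (hG : IsParityOblivious G) (x : ι → K) :
    (Fintype.card K : ℝ) * ∑ y, ∑ z with z y = x y, G z =
      (Fintype.card K : ℝ) ^ Fintype.card ι * G x + (Fintype.card ι - 1) * ∑ z, G z := by
  have hdouble := card_mul_sum_sum_filter_dotProduct_eq G x
  set q : ℝ := (Fintype.card K : ℝ) with hq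
  have hparity : ∀ r : ι → K, 2 ≤ #{i | r i ≠ 0} →
      q * ∑ z with r ⬝ᵥ z = r ⬝ᵥ x, G z - ∑ z, G z = 0 := fun r hr => by
    rw [sub_eq_zero, ← card_smul_sum_filter_eq_sum _ G (hG r hr), nsmul_eq_mul]
  have hsingle : ∀ y, ∀ a ∈ ({a | a ≠ 0} : Finset K),
      q * ∑ z with Pi.single y a ⬝ᵥ z = Pi.single y a ⬝ᵥ x, G z - ∑ z, G z =
        q * ∑ z with z y = x y, G z - ∑ z, G z := fun y a ha => by
    simp only [single_dotProduct, mul_right_inj' (mem_filter.mp ha).2]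
  have hnonzero : (#({a | a ≠ 0} : Finset K) : ℝ) = q - 1 := by
    rw [filter_ne', card_erase_of_mem (mem_univ 0), card_univ, Nat.cast_pred Fintype.card_pos]
  have key := sum_eq_add_sum_sum_single _ hparity
  simp only [sum_sub_distrib, ← mul_sum, zero_dotProduct, filter_true, sum_congr rfl (hsingle _),
    sum_const, nsmul_eq_mul, hnonzero, card_univ, Fintype.card_fun, Nat.cast_pow] at key
  have hq1 : q - 1 ≠ 0 := sub_ne_zero.mpr (by simpa [hq] using Fintype.one_lt_card.ne')
  refine mul_left_cancel₀ hq1 ?_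
  linear_combination hdouble - key

end Parity

section OntologicalModel

variable {Λ : Type*} [MeasurableSpace Λ]

theorem integrable_of_nonneg_of_le_one {ν : Measure Λ} [IsFiniteMeasure ν] {f : Λ → ℝ}
    (hf : Measurable f) (h0 : ∀ l, 0 ≤ f l) (h1 : ∀ l, f l ≤ 1) : Integrable f ν :=
  .of_bound hf.aestronglyMeasurable 1 <| ae_of_all _ fun l => by
    rw [Real.norm_eq_abs, abs_of_nonneg (h0 l)]
    exact h1 l

theorem sum_filter_ne_integral_eq_one_sub [Fintype K] [DecidableEq K] {ν : Measure Λ}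
    [IsProbabilityMeasure ν] {f : K → Λ → ℝ} (hf : ∀ b, Integrable (f b) ν)
    (hsum : ∀ l, ∑ b, f b l = 1) (c : K) :
    ∑ b with b ≠ c, ∫ l, f b l ∂ν = 1 - ∫ l, f c l ∂ν := by
  rw [filter_ne', sum_erase_eq_sub (mem_univ c), ← integral_finsetSum _ fun b _ => hf b]
  simp [hsum]

variable [Field K] [Fintype K] [DecidableEq K]

theorem IsParityOblivious.integral {μ : (ι → K) → Measure Λ} (hμ : IsParityOblivious μ)
    {f : Λ → ℝ} (hf : ∀ z, Integrable f (μ z)) :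
    IsParityOblivious fun z => ∫ l, f l ∂μ z := fun r hr k k' => by
  simp only [← integral_finsetSum_measure fun z _ => hf z, hμ r hr k k']

def jointResponse (ξ : K → ι → Λ → ℝ) (x : ι → K) (l : Λ) : ℝ := ∏ y, ξ (x y) y l

theorem card_sub_one_mul_card_pow_le_card_mul_sum_integral_apply_self {μ : (ι → K) → Measure Λ}
    [∀ z, IsProbabilityMeasure (μ z)] (hμ : IsParityOblivious μ) {ξ : K → ι → Λ → ℝ}
    (hint : ∀ x z, Integrable (jointResponse ξ x) (μ z)) (hnonneg : ∀ b y l, 0 ≤ ξ b y l)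
    (hsum : ∀ y l, ∑ b, ξ b y l = 1) :
    ((Fintype.card ι : ℝ) - 1) * (Fintype.card K : ℝ) ^ Fintype.card ι ≤
      (Fintype.card K : ℝ) * ∑ z, ∑ y, ∫ l, ξ (z y) y l ∂μ z := by
  set g : (ι → K) → (ι → K) → ℝ := fun x z => ∫ l, jointResponse ξ x l ∂μ z with hg
  have hjoint_sum : ∀ l, ∑ x, jointResponse ξ x l = 1 := fun l =>
    sum_prod_eq_one (fun y b => ξ b y l) fun y => hsum y l
  have hjoint_marginal : ∀ y b l, ∑ x with x y = b, jointResponse ξ x l = ξ b y l :=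
    fun y b l => sum_filter_prod_eq (fun y b => ξ b y l) (fun y => hsum y l) y b
  have htotal : ∀ z, ∑ x, g x z = 1 := fun z => by
    simp only [hg]
    rw [← integral_finsetSum _ fun x _ => hint x z]
    simp [hjoint_sum]
  have hcorrect : ∀ z y, ∫ l, ξ (z y) y l ∂μ z = ∑ x with x y = z y, g x z := fun z y => by
    simp only [hg]
    rw [← integral_finsetSum _ fun x _ => hint x z]
    simp only [hjoint_marginal]
  have hguess : ∀ x, ((Fintype.card ι : ℝ) - 1) * ∑ z, g x z ≤
      (Fintype.card K : ℝ) * ∑ y, ∑ z with z y = x y, g x z := fun x => by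
    rw [(hμ.integral (hint x)).card_mul_sum_sum_filter_apply_eq x]
    have hgxx : 0 ≤ g x x := integral_nonneg fun l => prod_nonneg fun y _ => hnonneg _ _ _
    exact le_add_of_nonneg_left (by positivity)
  calc ((Fintype.card ι : ℝ) - 1) * (Fintype.card K : ℝ) ^ Fintype.card ι
      = ∑ x, ((Fintype.card ι : ℝ) - 1) * ∑ z, g x z := by
        rw [← mul_sum, sum_comm]
        simp [htotal]
    _ ≤ ∑ x, (Fintype.card K : ℝ) * ∑ y, ∑ z with z y = x y, g x z := sum_le_sum fun x _ => hguess x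
    _ = (Fintype.card K : ℝ) * ∑ z, ∑ y, ∫ l, ξ (z y) y l ∂μ z := by
        rw [← mul_sum, sum_sum_sum_filter_apply_eq_comm]
        simp only [hcorrect]

end OntologicalModel

/-- **Preparation-noncontextual bound for the (n,m) POREC.** For every integer `n ≥ 2` and
every prime `m`, every ontological model (ontic space `Λ`, preparation measures `μ x`,
response functions `ξ`) whose preparation measures satisfy the parity-class equality implied
by preparation noncontextuality has POREC success probability at most `1 - (n-1)/(m·n)`. -/
theorem porec_noncontextual_bound
    (n : ℕ) (hn : 2 ≤ n) (m : ℕ) (hm : Nat.Prime m) [NeZero m]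
    (Λ : Type) [MeasurableSpace Λ]
    (μ : (Fin n → ZMod m) → Measure Λ)
    (hμ : ∀ x, IsProbabilityMeasure (μ x))
    (ξ : ZMod m → Fin n → Λ → ℝ)
    (hξ_meas : ∀ b y, Measurable (ξ b y))
    (hξ_nonneg : ∀ b y lam, 0 ≤ ξ b y lam)
    (hξ_le_one : ∀ b y lam, ξ b y lam ≤ 1)
    (hξ_sum : ∀ y lam, ∑ b, ξ b y lam = 1)
    (hPNC : ∀ r : Fin n → ZMod m,
      2 ≤ (Finset.univ.filter fun i => r i ≠ 0).card →
      ∀ k k' : ZMod m,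
        ∑ x ∈ Finset.univ.filter (fun x : Fin n → ZMod m => ∑ i, r i * x i = k), μ x =
        ∑ x ∈ Finset.univ.filter (fun x : Fin n → ZMod m => ∑ i, r i * x i = k'), μ x) :
    (1 / (n * m ^ n) : ℝ) *
        ∑ x : Fin n → ZMod m, ∑ y : Fin n,
          ∑ b ∈ Finset.univ.filter (fun b => b ≠ x y), ∫ lam, ξ b y lam ∂(μ x)
      ≤ 1 - ((n : ℝ) - 1) / (m * n) := by
  have := Fact.mk hm
  have hjoint_int : ∀ x z, Integrable (jointResponse ξ x) (μ z) := fun x z =>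
    integrable_of_nonneg_of_le_one (Finset.measurable_prod _ fun y _ => hξ_meas _ _)
      (fun l => prod_nonneg fun y _ => hξ_nonneg _ _ _)
      (fun l => prod_le_one (fun y _ => hξ_nonneg _ _ _) fun y _ => hξ_le_one _ _ _)
  have hcorrect := card_sub_one_mul_card_pow_le_card_mul_sum_integral_apply_self hPNC
    hjoint_int hξ_nonneg hξ_sum
  have herror : ∀ x y, ∑ b with b ≠ x y, ∫ l, ξ b y l ∂μ x = 1 - ∫ l, ξ (x y) y l ∂μ x :=
    fun x y => sum_filter_ne_integral_eq_one_sub (fun b => integrable_of_nonneg_of_le_one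
      (hξ_meas b y) (hξ_nonneg b y) (hξ_le_one b y)) (hξ_sum y) (x y)
  simp only [Fintype.card_fin, ZMod.card] at hcorrect
  simp only [herror, sum_sub_distrib, sum_const, card_univ, Fintype.card_fun, Fintype.card_fin,
    ZMod.card, nsmul_eq_mul, mul_one, Nat.cast_pow]
  have hn0 : (0 : ℝ) < n := by exact_mod_cast (by omega : 0 < n)
  have hm0 : (0 : ℝ) < m := by exact_mod_cast hm.pos
  rw [div_mul_eq_mul_div, one_mul, div_le_iff₀ (by positivity)]
  field_simp
  linarith
end

section
/- For every prime m ≥ 3, every qubit strategy for the (2,m) parity-oblivious random exclusion code satisfying full parity-obliviousness and using, for each y ∈ {1,2}, a two-outcome projective measurement has success probability at most (m−1)/m + 1/(m·√2). -/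
/-!
Over a prime field, parity-obliviousness forces the rectangle identity
`ρ a b + ρ a' b' = ρ a b' + ρ a' b`. Indeed, the sums of `ρ` along the lines `x₁ + s x₂ = const`
through `(a, b)` and through `(a', b)` agree for `s ≠ 0`, and differ by `∑ c, (ρ a c - ρ a' c)`
for `s = 0`; summing the differences over all `s` gives
`m • (ρ a b - ρ a' b) = ∑ c, (ρ a c - ρ a' c)`, which does not depend on `b`.

A two-outcome measurement only ever outputs `0` or `1`, so by the rectangle identity the success
probability equals `(m - 1)/m - (d₁ + d₂)/(4m)`, where `d₁ = ⟨m̂₁·σ⟩_{ρ₀₀} - ⟨m̂₁·σ⟩_{ρ₁₀}` and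
`d₂ = ⟨m̂₂·σ⟩_{ρ₀₀} - ⟨m̂₂·σ⟩_{ρ₀₁}`. Again by the rectangle identity, `2 (d₁ + d₂)` is a CHSH-type
combination of expectations of `(m̂₁ + m̂₂)·σ` and `(m̂₁ - m̂₂)·σ` in the four states `ρ_{ij}`,
`i, j ∈ {0, 1}`. Each is bounded by the norm of the vector (the Bloch ball), and
`‖m̂₁ + m̂₂‖ + ‖m̂₁ - m̂₂‖ ≤ 2√2` by the parallelogram law.
-/

open Finset
open scoped ComplexOrder

noncomputable section

/-- Pauli matrix `σ_x`. -/
def sigmaX : Matrix (Fin 2) (Fin 2) ℂ := !![0, 1; 1, 0]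

/-- Pauli matrix `σ_y`. -/
def sigmaY : Matrix (Fin 2) (Fin 2) ℂ := !![0, -Complex.I; Complex.I, 0]

/-- Pauli matrix `σ_z`. -/
def sigmaZ : Matrix (Fin 2) (Fin 2) ℂ := !![1, 0; 0, -1]

/-- `v·σ = v₁σ_x + v₂σ_y + v₃σ_z` for `v ∈ ℝ³`. -/
def dotSigma (v : EuclideanSpace ℝ (Fin 3)) : Matrix (Fin 2) (Fin 2) ℂ :=
  v 0 • sigmaX + v 1 • sigmaY + v 2 • sigmaZ

open scoped Matrix

lemma dotSigma_add (v w : EuclideanSpace ℝ (Fin 3)) :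
    dotSigma (v + w) = dotSigma v + dotSigma w := by
  simp only [dotSigma, PiLp.add_apply, add_smul]
  abel

lemma dotSigma_sub (v w : EuclideanSpace ℝ (Fin 3)) :
    dotSigma (v - w) = dotSigma v - dotSigma w := by
  simp only [dotSigma, PiLp.sub_apply, sub_smul]
  abel

lemma dotSigma_isHermitian (v : EuclideanSpace ℝ (Fin 3)) : (dotSigma v).IsHermitian := by
  ext i j
  fin_cases i <;> fin_cases j <;> simp [dotSigma, sigmaX, sigmaY, sigmaZ]

lemma dotSigma_mul_self (v : EuclideanSpace ℝ (Fin 3)) :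
    dotSigma v * dotSigma v = (‖v‖ ^ 2 : ℝ) • (1 : Matrix (Fin 2) (Fin 2) ℂ) := by
  rw [EuclideanSpace.norm_sq_eq, Fin.sum_univ_three]
  ext i j
  fin_cases i <;> fin_cases j <;>
    simp [dotSigma, sigmaX, sigmaY, sigmaZ, Matrix.mul_apply] <;> ring_nf <;> simp [Complex.I_sq]

lemma re_trace_mul_conjTranspose_mul_self_nonneg {n : Type*} [Fintype n]
    {ρ : Matrix n n ℂ} (hρ : ρ.PosSemidef) (A : Matrix n n ℂ) :
    0 ≤ ((ρ * (Aᴴ * A)).trace).re := by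
  rw [← Matrix.mul_assoc, Matrix.trace_mul_comm, ← Matrix.mul_assoc]
  exact (RCLike.nonneg_iff.mp (hρ.mul_mul_conjTranspose_same A).trace_nonneg).1

theorem abs_re_trace_mul_dotSigma_le {ρ : Matrix (Fin 2) (Fin 2) ℂ} (hρ : ρ.PosSemidef)
    (htr : ρ.trace = 1) (v : EuclideanSpace ℝ (Fin 3)) :
    |((ρ * dotSigma v).trace).re| ≤ ‖v‖ := by
  rcases (norm_nonneg v).eq_or_lt with hv | hv
  · rw [eq_comm, norm_eq_zero] at hv
    simp [hv, dotSigma]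
  -- `A = ‖v‖ + s v·σ` equals `(2‖v‖)⁻¹ AᴴA`, so `tr (ρ A) ≥ 0`
  have key : ∀ s : ℝ, s ^ 2 = 1 → 0 ≤ ‖v‖ + s * ((ρ * dotSigma v).trace).re := by
    intro s hs
    set A : Matrix (Fin 2) (Fin 2) ℂ := ‖v‖ • 1 + s • dotSigma v
    have hA : Aᴴ * A = (2 * ‖v‖) • A := by
      have hAH : Aᴴ = A := by
        simp [A, Matrix.conjTranspose_add, Matrix.conjTranspose_smul, (dotSigma_isHermitian v).eq]
      simp only [hAH, A, add_mul, mul_add, dotSigma_mul_self, one_mul, mul_one,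
        smul_mul_assoc, mul_smul_comm, smul_smul]
      linear_combination (norm := module) ‖v‖ ^ 2 • hs • (1 : Matrix (Fin 2) (Fin 2) ℂ)
    have hgram := re_trace_mul_conjTranspose_mul_self_nonneg hρ A
    simp only [hA, A, Matrix.mul_smul, Matrix.mul_add, Matrix.trace_smul, Matrix.trace_add, htr,
      Complex.real_smul, Complex.mul_re, Complex.add_re, Complex.ofReal_re, Complex.ofReal_im,
      mul_one, zero_mul, sub_zero] at hgram
    exact (mul_nonneg_iff_of_pos_left (by positivity : (0:ℝ) < 2 * ‖v‖)).mp hgram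
  rw [abs_le]
  constructor <;> linarith [key 1 (by norm_num), key (-1) (by norm_num)]

lemma norm_add_add_norm_sub_le {E : Type*} [NormedAddCommGroup E] [InnerProductSpace ℝ E]
    {u v : E} (hu : ‖u‖ = 1) (hv : ‖v‖ = 1) :
    ‖u + v‖ + ‖u - v‖ ≤ 2 * Real.sqrt 2 := by
  have hpar := parallelogram_law_with_norm ℝ u v
  rw [hu, hv] at hpar
  nlinarith [norm_nonneg (u + v), norm_nonneg (u - v), Real.sqrt_nonneg 2,
    Real.sq_sqrt (zero_le_two : (0 : ℝ) ≤ 2), sq_nonneg (‖u + v‖ - ‖u - v‖)]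

section ParityOblivious

variable {F V : Type*} [Field F] [Fintype F] [AddCommGroup V]

def ParityOblivious [DecidableEq F] (ρ : F → F → V) : Prop :=
  ∀ r₁ r₂ : F, r₁ ≠ 0 → r₂ ≠ 0 → ∀ k k' : F,
    ∑ x ∈ univ.filter (fun x : F × F => r₁ * x.1 + r₂ * x.2 = k), ρ x.1 x.2 =
    ∑ x ∈ univ.filter (fun x : F × F => r₁ * x.1 + r₂ * x.2 = k'), ρ x.1 x.2

lemma sum_add_mul_eq_sum (f : F → V) (a : F) {c : F} (hc : c ≠ 0) :
    ∑ s, f (a + s * c) = ∑ x, f x :=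
  ((Equiv.mulRight₀ c hc).trans (Equiv.addLeft a)).sum_comp f

lemma sum_filter_one_mul_add_mul_eq [DecidableEq F] (ρ : F → F → V) (s k : F) :
    ∑ x ∈ univ.filter (fun x : F × F => 1 * x.1 + s * x.2 = k), ρ x.1 x.2 =
      ∑ b, ρ (k - s * b) b := by
  rw [sum_filter, Fintype.sum_prod_type, sum_comm]
  refine sum_congr rfl fun b _ => ?_
  simp only [one_mul, ← eq_sub_iff_add_eq, sum_ite_eq', mem_univ, if_true]

theorem ParityOblivious.add_eq_add [DecidableEq F] [IsAddTorsionFree V] {ρ : F → F → V}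
    (hρ : ParityOblivious ρ) (a a' b b' : F) :
    ρ a b + ρ a' b' = ρ a b' + ρ a' b := by
  set D : F → V := fun c => ρ a c - ρ a' c
  have hline : ∀ s ≠ 0, ∀ k k', ∑ c, ρ (k - s * c) c = ∑ c, ρ (k' - s * c) c := by
    intro s hs k k'
    simpa only [sum_filter_one_mul_add_mul_eq] using hρ 1 s one_ne_zero hs k k'
  -- for `c ≠ b`, as `s` runs over `F` both `a + s * (b - c)` and `a' + s * (b - c)` run over `F`
  have hcard : ∀ b, Fintype.card F • D b = ∑ c, D c := by
    intro b
    calc Fintype.card F • D b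
        = ∑ c, ∑ s : F, (ρ (a + s * (b - c)) c - ρ (a' + s * (b - c)) c) := by
          rw [sum_eq_single b]
          · simp [D, smul_sub]
          · intro c _ hc
            rw [sum_sub_distrib, sum_add_mul_eq_sum (ρ · c) a (sub_ne_zero.2 (Ne.symm hc)),
              sum_add_mul_eq_sum (ρ · c) a' (sub_ne_zero.2 (Ne.symm hc)), sub_self]
          · simp
      _ = ∑ s : F, (∑ c, ρ (a + s * b - s * c) c - ∑ c, ρ (a' + s * b - s * c) c) := by
          rw [sum_comm]
          refine sum_congr rfl fun s _ => ?_
          rw [← sum_sub_distrib]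
          simp only [mul_sub, add_sub_assoc]
      _ = ∑ c, D c := by
          rw [sum_eq_single 0]
          · simp [D]
          · intro s _ hs
            rw [hline s hs (a + s * b) (a' + s * b), sub_self]
          · simp
  have hD : D b = D b' :=
    nsmul_right_injective Fintype.card_ne_zero ((hcard b).trans (hcard b').symm)
  exact sub_eq_sub_iff_add_eq_add.mp hD

end ParityOblivious

lemma re_trace_add_mul_eq {n : Type*} [Fintype n] {A B C D : Matrix n n ℂ} (h : A + B = C + D)
    (N : Matrix n n ℂ) :
    ((A * N).trace).re + ((B * N).trace).re = ((C * N).trace).re + ((D * N).trace).re := by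
  simpa only [Matrix.add_mul, Matrix.trace_add, Complex.add_re] using
    congrArg (fun X => ((X * N).trace).re) h

lemma sum_filter_ne_re_trace_mul {K n : Type*} [Fintype K] [DecidableEq K] [Fintype n]
    [DecidableEq n] {ρ : Matrix n n ℂ} (hρ : ρ.trace = 1) {M : K → Matrix n n ℂ}
    (hM : ∑ b, M b = 1) (x : K) :
    ∑ b ∈ univ.filter (fun b => b ≠ x), ((ρ * M b).trace).re = 1 - ((ρ * M x).trace).re := by
  have hsum : ∑ b, ((ρ * M b).trace).re = 1 := by
    rw [← Complex.re_sum, ← Matrix.trace_sum, ← Matrix.mul_sum, hM, Matrix.mul_one, hρ,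
      Complex.one_re]
  rw [filter_ne', sum_erase_eq_sub (mem_univ x), hsum]

section TwoOutcome

variable {K n : Type*} [Zero K] [One K] [DecidableEq K] [DecidableEq n]

def twoOutcome (N : Matrix n n ℂ) (b : K) : Matrix n n ℂ :=
  if b = 0 then (1 / 2 : ℝ) • (1 + N) else if b = 1 then (1 / 2 : ℝ) • (1 - N) else 0

variable (N : Matrix n n ℂ)

lemma twoOutcome_zero : twoOutcome N (0 : K) = (1 / 2 : ℝ) • (1 + N) := if_pos rfl

lemma twoOutcome_one (h01 : (0 : K) ≠ 1) : twoOutcome N (1 : K) = (1 / 2 : ℝ) • (1 - N) := by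
  rw [twoOutcome, if_neg h01.symm, if_pos rfl]

lemma twoOutcome_of_ne {b : K} (h0 : b ≠ 0) (h1 : b ≠ 1) : twoOutcome N b = 0 := by
  rw [twoOutcome, if_neg h0, if_neg h1]

variable [Fintype K]

lemma sum_twoOutcome (h01 : (0 : K) ≠ 1) : ∑ b : K, twoOutcome N b = 1 := by
  rw [Fintype.sum_eq_add 0 1 h01 fun b hb => twoOutcome_of_ne N hb.1 hb.2, twoOutcome_zero,
    twoOutcome_one N h01]
  module

variable [Fintype n]

lemma sum_re_trace_mul_twoOutcome (h01 : (0 : K) ≠ 1) {ρ : K → Matrix n n ℂ}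
    (hρ : ∀ a, (ρ a).trace = 1) :
    ∑ a, ((ρ a * twoOutcome N a).trace).re =
      1 + (((ρ 0 * N).trace).re - ((ρ 1 * N).trace).re) / 2 := by
  rw [Fintype.sum_eq_add 0 1 h01 fun b hb => by
    rw [twoOutcome_of_ne N hb.1 hb.2, Matrix.mul_zero, Matrix.trace_zero, Complex.zero_re],
    twoOutcome_zero, twoOutcome_one N h01]
  simp only [Matrix.mul_smul, Matrix.mul_add, Matrix.mul_sub, Matrix.mul_one, Matrix.trace_smul,
    Matrix.trace_add, Matrix.trace_sub, hρ, Complex.real_smul, Complex.re_ofReal_mul,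
    Complex.add_re, Complex.sub_re, Complex.one_re]
  ring

lemma sum_sum_re_trace_mul_twoOutcome (h01 : (0 : K) ≠ 1) {ρ : K → K → Matrix n n ℂ}
    (hρ : ∀ a b, (ρ a b).trace = 1) (hrect : ∀ a a' b b', ρ a b + ρ a' b' = ρ a b' + ρ a' b) :
    ∑ b, ∑ a, ((ρ a b * twoOutcome N a).trace).re =
      Fintype.card K * (1 + (((ρ 0 0 * N).trace).re - ((ρ 1 0 * N).trace).re) / 2) := by
  have hcol : ∀ b, ((ρ 0 b * N).trace).re - ((ρ 1 b * N).trace).re =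
      ((ρ 0 0 * N).trace).re - ((ρ 1 0 * N).trace).re := fun b => by
    linarith [re_trace_add_mul_eq (hrect 0 1 b 0) N]
  simp only [sum_re_trace_mul_twoOutcome N h01 (hρ · _), hcol, sum_const, card_univ, nsmul_eq_mul]

lemma sum_exclusion_twoOutcome (h01 : (0 : K) ≠ 1) {ρ : K → K → Matrix n n ℂ}
    (hρ : ∀ a b, (ρ a b).trace = 1) (hrect : ∀ a a' b b', ρ a b + ρ a' b' = ρ a b' + ρ a' b)
    (N₁ N₂ : Matrix n n ℂ) :
    ∑ x : K × K,
        ((∑ b ∈ univ.filter (fun b => b ≠ x.1), ((ρ x.1 x.2 * twoOutcome N₁ b).trace).re) +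
          (∑ b ∈ univ.filter (fun b => b ≠ x.2), ((ρ x.1 x.2 * twoOutcome N₂ b).trace).re)) =
      Fintype.card K * (2 * Fintype.card K - 2 -
        ((((ρ 0 0 * N₁).trace).re - ((ρ 1 0 * N₁).trace).re) +
          (((ρ 0 0 * N₂).trace).re - ((ρ 0 1 * N₂).trace).re)) / 2) := by
  have guess₁ : ∑ x : K × K, ((ρ x.1 x.2 * twoOutcome N₁ x.1).trace).re =
      Fintype.card K * (1 + (((ρ 0 0 * N₁).trace).re - ((ρ 1 0 * N₁).trace).re) / 2) := by
    rw [Fintype.sum_prod_type, sum_comm]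
    exact sum_sum_re_trace_mul_twoOutcome N₁ h01 hρ hrect
  have guess₂ : ∑ x : K × K, ((ρ x.1 x.2 * twoOutcome N₂ x.2).trace).re =
      Fintype.card K * (1 + (((ρ 0 0 * N₂).trace).re - ((ρ 0 1 * N₂).trace).re) / 2) := by
    rw [Fintype.sum_prod_type]
    exact sum_sum_re_trace_mul_twoOutcome N₂ h01 (fun b a => hρ a b)
      (fun b b' a a' => by rw [add_comm, hrect, add_comm])
  simp only [sum_filter_ne_re_trace_mul (hρ _ _) (sum_twoOutcome _ h01)]
  rw [sum_add_distrib, sum_sub_distrib, sum_sub_distrib, guess₁, guess₂]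
  simp only [sum_const, card_univ, Fintype.card_prod, nsmul_eq_mul, Nat.cast_mul]
  ring

end TwoOutcome

theorem neg_two_sqrt_two_le_of_add_eq_add {K : Type*} [Zero K] [One K]
    {ρ : K → K → Matrix (Fin 2) (Fin 2) ℂ}
    (hρ_psd : ∀ a b, (ρ a b).PosSemidef) (hρ_tr : ∀ a b, (ρ a b).trace = 1)
    (hrect : ρ 0 0 + ρ 1 1 = ρ 0 1 + ρ 1 0) {u v : EuclideanSpace ℝ (Fin 3)}
    (hu : ‖u‖ = 1) (hv : ‖v‖ = 1) :
    -(2 * Real.sqrt 2) ≤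
      ((ρ 0 0 * dotSigma u).trace).re - ((ρ 1 0 * dotSigma u).trace).re +
        (((ρ 0 0 * dotSigma v).trace).re - ((ρ 0 1 * dotSigma v).trace).re) := by
  have bound : ∀ a b w, |((ρ a b * dotSigma w).trace).re| ≤ ‖w‖ := fun a b =>
    abs_re_trace_mul_dotSigma_le (hρ_psd a b) (hρ_tr a b)
  have hadd : ∀ a b, ((ρ a b * dotSigma (u + v)).trace).re =
      ((ρ a b * dotSigma u).trace).re + ((ρ a b * dotSigma v).trace).re := fun a b => by
    rw [dotSigma_add, Matrix.mul_add, Matrix.trace_add, Complex.add_re]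
  have hsub : ∀ a b, ((ρ a b * dotSigma (u - v)).trace).re =
      ((ρ a b * dotSigma u).trace).re - ((ρ a b * dotSigma v).trace).re := fun a b => by
    rw [dotSigma_sub, Matrix.mul_sub, Matrix.trace_sub, Complex.sub_re]
  have h00 := (abs_le.mp (bound 0 0 (u + v))).1
  have h11 := (abs_le.mp (bound 1 1 (u + v))).2
  have h01 := (abs_le.mp (bound 0 1 (u - v))).1
  have h10 := (abs_le.mp (bound 1 0 (u - v))).2
  rw [hadd] at h00 h11
  rw [hsub] at h01 h10
  linarith [re_trace_add_mul_eq hrect (dotSigma u), re_trace_add_mul_eq hrect (dotSigma v),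
    norm_add_add_norm_sub_le hu hv]

lemma porec_value_le {m D : ℝ} (hm : 0 < m) (hD : -(2 * Real.sqrt 2) ≤ D) :
    1 / (2 * m ^ 2) * (m * (2 * m - 2 - D / 2)) ≤ (m - 1) / m + 1 / (m * Real.sqrt 2) := by
  calc 1 / (2 * m ^ 2) * (m * (2 * m - 2 - D / 2)) = (m - 1) / m + (-D / 4) / m := by
        field_simp
        ring
    _ ≤ (m - 1) / m + (2 * Real.sqrt 2 / 4) / m := by gcongr; linarith
    _ = (m - 1) / m + 1 / (m * Real.sqrt 2) := by
        field_simp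
        linear_combination 2 * Real.mul_self_sqrt (zero_le_two : (0 : ℝ) ≤ 2)

theorem porec2m_projective_qubit_bound_general
    (m : ℕ) (hm : Nat.Prime m) [NeZero m]
    (ρ : ZMod m → ZMod m → Matrix (Fin 2) (Fin 2) ℂ)
    (hρ_psd : ∀ x₁ x₂, (ρ x₁ x₂).PosSemidef)
    (hρ_tr : ∀ x₁ x₂, (ρ x₁ x₂).trace = 1)
    (M₁ M₂ : ZMod m → Matrix (Fin 2) (Fin 2) ℂ)
    (mhat₁ mhat₂ : EuclideanSpace ℝ (Fin 3))
    (hmhat₁ : ‖mhat₁‖ = 1) (hmhat₂ : ‖mhat₂‖ = 1)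
    (hM₁ : ∀ b : ZMod m, M₁ b =
      if b = 0 then (1 / 2 : ℝ) • ((1 : Matrix (Fin 2) (Fin 2) ℂ) + dotSigma mhat₁)
      else if b = 1 then (1 / 2 : ℝ) • ((1 : Matrix (Fin 2) (Fin 2) ℂ) - dotSigma mhat₁)
      else 0)
    (hM₂ : ∀ b : ZMod m, M₂ b =
      if b = 0 then (1 / 2 : ℝ) • ((1 : Matrix (Fin 2) (Fin 2) ℂ) + dotSigma mhat₂)
      else if b = 1 then (1 / 2 : ℝ) • ((1 : Matrix (Fin 2) (Fin 2) ℂ) - dotSigma mhat₂)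
      else 0)
    (hPO : ∀ r₁ r₂ : ZMod m, r₁ ≠ 0 → r₂ ≠ 0 → ∀ k k' : ZMod m,
      ∑ x ∈ Finset.univ.filter (fun x : ZMod m × ZMod m => r₁ * x.1 + r₂ * x.2 = k),
        ρ x.1 x.2 =
      ∑ x ∈ Finset.univ.filter (fun x : ZMod m × ZMod m => r₁ * x.1 + r₂ * x.2 = k'),
        ρ x.1 x.2) :
    (1 / (2 * (m : ℝ) ^ 2)) *
        ∑ x : ZMod m × ZMod m,
          ((∑ b ∈ Finset.univ.filter (fun b => b ≠ x.1), ((ρ x.1 x.2 * M₁ b).trace).re) +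
           (∑ b ∈ Finset.univ.filter (fun b => b ≠ x.2), ((ρ x.1 x.2 * M₂ b).trace).re))
      ≤ ((m : ℝ) - 1) / m + 1 / (m * Real.sqrt 2) := by
  have : Fact m.Prime := ⟨hm⟩
  obtain rfl : M₁ = twoOutcome (dotSigma mhat₁) := funext hM₁
  obtain rfl : M₂ = twoOutcome (dotSigma mhat₂) := funext hM₂
  have : IsAddTorsionFree (Matrix (Fin 2) (Fin 2) ℂ) := .of_module_rat _
  have hrect : ∀ a a' b b', ρ a b + ρ a' b' = ρ a b' + ρ a' b :=
    ParityOblivious.add_eq_add hPO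
  rw [sum_exclusion_twoOutcome zero_ne_one hρ_tr hrect, ZMod.card]
  exact porec_value_le (by exact_mod_cast hm.pos)
    (neg_two_sqrt_two_le_of_add_eq_add hρ_psd hρ_tr (hrect 0 1 0 1) hmhat₁ hmhat₂)

/-- **Projective qubit bound for the (2,m) POREC.** For every prime `m ≥ 3`, every
fully parity-oblivious qubit strategy whose measurements are two-outcome projective
measurements `M_{0|y} = (I + m̂_y·σ)/2`, `M_{1|y} = (I − m̂_y·σ)/2`, `M_{b|y} = 0` otherwise,
has POREC success probability at most `(m−1)/m + 1/(m√2)`. -/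
theorem porec2m_projective_qubit_bound
    (m : ℕ) (hm : Nat.Prime m) (hm3 : 3 ≤ m) [NeZero m]
    (ρ : ZMod m → ZMod m → Matrix (Fin 2) (Fin 2) ℂ)
    (hρ_psd : ∀ x₁ x₂, (ρ x₁ x₂).PosSemidef)
    (hρ_tr : ∀ x₁ x₂, (ρ x₁ x₂).trace = 1)
    (M₁ M₂ : ZMod m → Matrix (Fin 2) (Fin 2) ℂ)
    (mhat₁ mhat₂ : EuclideanSpace ℝ (Fin 3))
    (hmhat₁ : ‖mhat₁‖ = 1) (hmhat₂ : ‖mhat₂‖ = 1)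
    (hM₁ : ∀ b : ZMod m, M₁ b =
      if b = 0 then (1 / 2 : ℝ) • ((1 : Matrix (Fin 2) (Fin 2) ℂ) + dotSigma mhat₁)
      else if b = 1 then (1 / 2 : ℝ) • ((1 : Matrix (Fin 2) (Fin 2) ℂ) - dotSigma mhat₁)
      else 0)
    (hM₂ : ∀ b : ZMod m, M₂ b =
      if b = 0 then (1 / 2 : ℝ) • ((1 : Matrix (Fin 2) (Fin 2) ℂ) + dotSigma mhat₂)
      else if b = 1 then (1 / 2 : ℝ) • ((1 : Matrix (Fin 2) (Fin 2) ℂ) - dotSigma mhat₂)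
      else 0)
    (hPO : ∀ r₁ r₂ : ZMod m, r₁ ≠ 0 → r₂ ≠ 0 → ∀ k k' : ZMod m,
      ∑ x ∈ Finset.univ.filter (fun x : ZMod m × ZMod m => r₁ * x.1 + r₂ * x.2 = k),
        ρ x.1 x.2 =
      ∑ x ∈ Finset.univ.filter (fun x : ZMod m × ZMod m => r₁ * x.1 + r₂ * x.2 = k'),
        ρ x.1 x.2) :
    (1 / (2 * (m : ℝ) ^ 2)) *
        ∑ x : ZMod m × ZMod m,
          ((∑ b ∈ Finset.univ.filter (fun b => b ≠ x.1), ((ρ x.1 x.2 * M₁ b).trace).re) +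
           (∑ b ∈ Finset.univ.filter (fun b => b ≠ x.2), ((ρ x.1 x.2 * M₂ b).trace).re))
      ≤ ((m : ℝ) - 1) / m + 1 / (m * Real.sqrt 2) :=
  porec2m_projective_qubit_bound_general m hm ρ hρ_psd hρ_tr M₁ M₂ mhat₁ mhat₂ hmhat₁ hmhat₂ hM₁ hM₂
    hPO

end
end

section
/- Every qubit strategy for the (2,3) parity-oblivious random access code (retrieval task) satisfying full parity-obliviousness has success probability at most 1/3 + 1/(3·√2); in particular, since 1/3 + 1/(3√2) < 2/3, no qubit strategy exceeds the noncontextual retrieval bound 2/3. -/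
/-!
Parity-obliviousness for the masks `(1,1)` and `(1,2)` makes the states additive,
`ρ i k + ρ j l = ρ i l + ρ j k`, so their Bloch vectors are `a i + b j`, all in the unit ball.
As `Re tr (ρ M) = (tr M + ⟪r_ρ, r_M⟫) / 2`, and the Bloch vectors of a qubit POVM sum to `0` with
norms summing to at most `2`, a measurement gains at most `2r` on points lying in a ball of radius
`r`. Putting the `a i` in their Chebyshev ball of radius `r`, quadratic growth at the Chebyshev
centre puts the `b j` in a ball of radius `s` with `r² + s² ≤ 1`, and `r + s ≤ √2` gives the bound.
-/

open Finset Filter Topology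
open scoped ComplexOrder ComplexConjugate RealInnerProductSpace

instance Matrix.instIsAddTorsionFree {m n α : Type*} [AddMonoid α] [IsAddTorsionFree α] :
    IsAddTorsionFree (Matrix m n α) :=
  inferInstanceAs (IsAddTorsionFree (m → n → α))

lemma sum_filter_fst_add_eq {R M : Type*} [AddCommGroup R] [Fintype R] [DecidableEq R]
    [AddCommMonoid M] (g : R → R) (k : R) (F : R × R → M) :
    ∑ x ∈ univ.filter (fun x : R × R => x.1 + g x.2 = k), F x = ∑ b, F (k - g b, b) := by
  rw [sum_filter, Fintype.sum_prod_type_right]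
  refine sum_congr rfl fun b _ => ?_
  simp_rw [← eq_sub_iff_add_eq]
  exact (sum_ite_eq' univ _ _).trans (if_pos (mem_univ _))

lemma sum_zmod_three {M : Type*} [AddCommMonoid M] (f : ZMod 3 → M) :
    ∑ i, f i = f 0 + f 1 + f 2 :=
  Fin.sum_univ_three f

/-- The row, the column and the two diagonals through `(i, j)` cover each point of `(ZMod 3)²`
once, except `(i, j)` itself, which they cover four times. -/
lemma three_nsmul_add_sum_eq_sum_lines {V : Type*} [AddCommGroup V] (f : ZMod 3 → ZMod 3 → V)
    (i j : ZMod 3) :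
    3 • f i j + ∑ a, ∑ b, f a b =
      ∑ b, f i b + ∑ a, f a j + ∑ b, f (i + j - b) b + ∑ b, f (i + 2 * j - 2 * b) b := by
  have cases : ∀ x : ZMod 3, x = 0 ∨ x = 1 ∨ x = 2 := by decide
  obtain rfl | rfl | rfl := cases i <;> obtain rfl | rfl | rfl := cases j <;>
    simp only [sum_zmod_three] <;> reduce_mod_char <;> abel

theorem add_eq_add_of_sum_lines_eq {V : Type*} [AddCommGroup V] [IsAddTorsionFree V]
    {f : ZMod 3 → ZMod 3 → V} (h₁ : ∀ k k', ∑ b, f (k - b) b = ∑ b, f (k' - b) b)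
    (h₂ : ∀ k k', ∑ b, f (k - 2 * b) b = ∑ b, f (k' - 2 * b) b) (i j k l : ZMod 3) :
    f i k + f j l = f i l + f j k := by
  have hcover : ∀ i j, 3 • f i j + ∑ a, ∑ b, f a b =
      ∑ b, f i b + ∑ a, f a j + ∑ b, f (-b) b + ∑ b, f (-(2 * b)) b := fun i j => by
    simpa only [zero_sub, h₁ (i + j) 0, h₂ (i + 2 * j) 0] using
      three_nsmul_add_sum_eq_sum_lines f i j
  refine nsmul_right_injective (by norm_num : 3 ≠ 0) ?_
  linear_combination (norm := module) hcover i k + hcover j l - hcover i l - hcover j k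

section ChebyshevCenter

variable {ι E : Type*} [Fintype ι] [Nonempty ι] [NormedAddCommGroup E]

noncomputable def maxSqDist (a : ι → E) (x : E) : ℝ :=
  univ.sup' univ_nonempty fun i => ‖a i - x‖ ^ 2

lemma sq_norm_sub_le_maxSqDist (a : ι → E) (i : ι) (x : E) : ‖a i - x‖ ^ 2 ≤ maxSqDist a x :=
  le_sup' (fun i => ‖a i - x‖ ^ 2) (mem_univ i)

lemma exists_maxSqDist_eq (a : ι → E) (x : E) : ∃ i, maxSqDist a x = ‖a i - x‖ ^ 2 := by
  obtain ⟨i, -, hi⟩ := exists_mem_eq_sup' univ_nonempty fun i => ‖a i - x‖ ^ 2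
  exact ⟨i, hi⟩

lemma maxSqDist_nonneg (a : ι → E) (x : E) : 0 ≤ maxSqDist a x :=
  (sq_nonneg _).trans (sq_norm_sub_le_maxSqDist a (Classical.arbitrary ι) x)

lemma exists_forall_maxSqDist_le [ProperSpace E] (a : ι → E) :
    ∃ g, ∀ x, maxSqDist a g ≤ maxSqDist a x := by
  have hcont : Continuous (maxSqDist a) :=
    Continuous.finset_sup'_apply univ_nonempty fun i _ => by fun_prop
  let i := Classical.arbitrary ι
  refine hcont.exists_forall_le (tendsto_atTop_mono (sq_norm_sub_le_maxSqDist a i) ?_)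
  exact ((tendsto_pow_atTop two_ne_zero).comp (tendsto_dist_left_cocompact_atTop (a i))).congr
    fun x => by rw [Function.comp_apply, dist_eq_norm]

variable [InnerProductSpace ℝ E]

lemma norm_sub_lineMap_sq (a g x : E) (t : ℝ) :
    ‖a - (g + t • (x - g))‖ ^ 2 =
      (1 - t) * ‖a - g‖ ^ 2 + t * ‖a - x‖ ^ 2 - t * (1 - t) * ‖x - g‖ ^ 2 := by
  rw [show a - (g + t • (x - g)) = (a - g) - t • (x - g) by abel,
    show a - x = (a - g) - (x - g) by abel]
  generalize a - g = u
  generalize x - g = d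
  rw [norm_sub_sq_real, norm_sub_sq_real, inner_smul_right, norm_smul, mul_pow, Real.norm_eq_abs,
    sq_abs]
  ring

/-- `maxSqDist a` is `2`-strongly convex (by `norm_sub_lineMap_sq`), so it grows at least
quadratically away from a minimiser: compare `g` with points `g + t • (x - g)` and let `t → 0`. -/
lemma maxSqDist_add_sq_le {a : ι → E} {g : E} (hg : ∀ y, maxSqDist a g ≤ maxSqDist a y) (x : E) :
    maxSqDist a g + ‖x - g‖ ^ 2 ≤ maxSqDist a x := by
  have hsegment : ∀ t ∈ Set.Ioo (0 : ℝ) 1,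
      maxSqDist a g + (1 - t) * ‖x - g‖ ^ 2 ≤ maxSqDist a x := by
    rintro t ⟨ht₀, ht₁⟩
    obtain ⟨i, hi⟩ := exists_maxSqDist_eq a (g + t • (x - g))
    have h := hg (g + t • (x - g))
    rw [hi, norm_sub_lineMap_sq] at h
    have hgi := sq_norm_sub_le_maxSqDist a i g
    have hxi := sq_norm_sub_le_maxSqDist a i x
    have : t * (maxSqDist a g + (1 - t) * ‖x - g‖ ^ 2) ≤ t * maxSqDist a x := by nlinarith
    exact le_of_mul_le_mul_left this ht₀
  have hlim : Tendsto (fun t : ℝ => maxSqDist a g + (1 - t) * ‖x - g‖ ^ 2) (𝓝[>] 0)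
      (𝓝 (maxSqDist a g + (1 - 0) * ‖x - g‖ ^ 2)) :=
    (Continuous.tendsto (by fun_prop) 0).mono_left nhdsWithin_le_nhds
  rw [sub_zero, one_mul] at hlim
  exact le_of_tendsto hlim (Filter.mem_of_superset (Ioo_mem_nhdsGT one_pos) hsegment)

/-- The `a i` are put in their Chebyshev ball `(g, r)`; then `maxSqDist_add_sq_le` at `x = -b j`
gives `r ^ 2 + ‖b j + g‖ ^ 2 ≤ maxᵢ ‖a i + b j‖ ^ 2 ≤ 1`. -/
lemma exists_balls_of_norm_add_le_one [ProperSpace E] {κ : Type*} [Nonempty κ] (a : ι → E)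
    (b : κ → E) (hab : ∀ i j, ‖a i + b j‖ ≤ 1) :
    ∃ c c' : E, ∃ r s : ℝ, 0 ≤ r ∧ 0 ≤ s ∧ r ^ 2 + s ^ 2 = 1 ∧
      (∀ i, ‖a i - c‖ ≤ r) ∧ ∀ j, ‖b j - c'‖ ≤ s := by
  obtain ⟨g, hg⟩ := exists_forall_maxSqDist_le a
  have hb : ∀ j, maxSqDist a g + ‖b j - -g‖ ^ 2 ≤ 1 := fun j => by
    obtain ⟨i, hi⟩ := exists_maxSqDist_eq a (-b j)
    have h := maxSqDist_add_sq_le hg (-b j)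
    rw [hi, sub_neg_eq_add, ← norm_neg, neg_sub', neg_neg] at h
    nlinarith [hab i j, norm_nonneg (a i + b j)]
  have hg₁ : maxSqDist a g ≤ 1 := by
    have := hb (Classical.arbitrary κ)
    nlinarith [sq_nonneg ‖b (Classical.arbitrary κ) - -g‖]
  refine ⟨g, -g, √(maxSqDist a g), √(1 - maxSqDist a g), Real.sqrt_nonneg _, Real.sqrt_nonneg _,
    ?_, fun i => ?_, fun j => ?_⟩
  · rw [Real.sq_sqrt (maxSqDist_nonneg a g), Real.sq_sqrt (sub_nonneg.2 hg₁)]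
    ring
  · exact Real.le_sqrt_of_sq_le (sq_norm_sub_le_maxSqDist a i g)
  · exact Real.le_sqrt_of_sq_le (by linarith [hb j])

omit [Nonempty ι] in
lemma sum_inner_le_of_sum_eq_zero {x μ : ι → E} {c : E} {r : ℝ} (hμ : ∑ i, μ i = 0)
    (hx : ∀ i, ‖x i - c‖ ≤ r) : ∑ i, ⟪x i, μ i⟫ ≤ r * ∑ i, ‖μ i‖ := by
  calc ∑ i, ⟪x i, μ i⟫ = ∑ i, ⟪x i - c, μ i⟫ := by
        simp only [inner_sub_left, sum_sub_distrib, ← inner_sum, hμ, inner_zero_right, sub_zero]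
    _ ≤ ∑ i, r * ‖μ i‖ := sum_le_sum fun i _ =>
        (real_inner_le_norm _ _).trans (mul_le_mul_of_nonneg_right (hx i) (norm_nonneg _))
    _ = r * ∑ i, ‖μ i‖ := (mul_sum ..).symm

theorem sum_inner_add_le [ProperSpace E] (a b : ι → E) (hab : ∀ i j, ‖a i + b j‖ ≤ 1)
    {μ ν : ι → E} (hμ : ∑ i, μ i = 0) (hν : ∑ j, ν j = 0) {C : ℝ} (hμC : ∑ i, ‖μ i‖ ≤ C)
    (hνC : ∑ j, ‖ν j‖ ≤ C) :
    ∑ i, ∑ j, (⟪a i + b j, μ i⟫ + ⟪a i + b j, ν j⟫) ≤ Fintype.card ι * C * √2 := by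
  obtain ⟨c, c', r, s, hr, hs, hrs, hac, hbc⟩ := exists_balls_of_norm_add_le_one a b hab
  have hC : 0 ≤ C := (sum_nonneg fun i _ => norm_nonneg (μ i)).trans hμC
  have hcol : ∀ j, ∑ i, ⟪a i + b j, μ i⟫ ≤ r * C := fun j =>
    (sum_inner_le_of_sum_eq_zero (c := c + b j) hμ fun i => by
      simpa [add_sub_add_right_eq_sub] using hac i).trans (mul_le_mul_of_nonneg_left hμC hr)
  have hrow : ∀ i, ∑ j, ⟪a i + b j, ν j⟫ ≤ s * C := fun i =>
    (sum_inner_le_of_sum_eq_zero (c := a i + c') hν fun j => by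
      simpa [add_sub_add_left_eq_sub] using hbc j).trans (mul_le_mul_of_nonneg_left hνC hs)
  have hrs₂ : r + s ≤ √2 := Real.le_sqrt_of_sq_le (by nlinarith [sq_nonneg (r - s)])
  calc ∑ i, ∑ j, (⟪a i + b j, μ i⟫ + ⟪a i + b j, ν j⟫)
      = ∑ j, ∑ i, ⟪a i + b j, μ i⟫ + ∑ i, ∑ j, ⟪a i + b j, ν j⟫ := by
        simp only [sum_add_distrib]
        rw [sum_comm]
    _ ≤ ∑ j : ι, r * C + ∑ i : ι, s * C :=
        add_le_add (sum_le_sum fun j _ => hcol j) (sum_le_sum fun i _ => hrow i)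
    _ ≤ Fintype.card ι * C * √2 := by
        simp only [sum_const, card_univ, nsmul_eq_mul]
        have hcard : (0 : ℝ) ≤ Fintype.card ι := Nat.cast_nonneg _
        nlinarith [mul_le_mul_of_nonneg_left hrs₂ (mul_nonneg hcard hC)]

end ChebyshevCenter

lemma Matrix.IsHermitian.exists_eq_fin_two {A : Matrix (Fin 2) (Fin 2) ℂ} (hA : A.IsHermitian) :
    ∃ (p q : ℝ) (z : ℂ), A = !![(p : ℂ), z; conj z, (q : ℂ)] := by
  refine ⟨(A 0 0).re, (A 1 1).re, A 0 1, ?_⟩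
  have h₀₀ : ((A 0 0).re : ℂ) = A 0 0 := hA.coe_re_apply_self 0
  have h₁₁ : ((A 1 1).re : ℂ) = A 1 1 := hA.coe_re_apply_self 1
  have h₁₀ : conj (A 0 1) = A 1 0 := hA.apply 1 0
  rw [h₀₀, h₁₁, h₁₀]
  exact Matrix.eta_fin_two A

/-- The coordinates of `2 • A - A.trace • 1` in the Pauli basis `(σ_z, σ_x, -σ_y)`. -/
noncomputable def blochVector : Matrix (Fin 2) (Fin 2) ℂ →+ EuclideanSpace ℝ (Fin 3) where
  toFun A := !₂[(A 0 0).re - (A 1 1).re, 2 * (A 0 1).re, 2 * (A 0 1).im]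
  map_zero' := by ext i; fin_cases i <;> simp
  map_add' A B := by ext i; fin_cases i <;> simp [add_sub_add_comm, mul_add]

lemma blochVector_one : blochVector 1 = 0 := by
  ext i; fin_cases i <;> simp [blochVector]

lemma blochVector_fin_two (p q : ℝ) (z : ℂ) :
    blochVector !![(p : ℂ), z; conj z, (q : ℂ)] = !₂[p - q, 2 * z.re, 2 * z.im] := by
  ext i; fin_cases i <;> simp [blochVector]

lemma re_trace_mul_eq {A B : Matrix (Fin 2) (Fin 2) ℂ} (hA : A.IsHermitian) (hB : B.IsHermitian) :
    (A * B).trace.re = (A.trace.re * B.trace.re + ⟪blochVector A, blochVector B⟫) / 2 := by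
  obtain ⟨p, q, z, rfl⟩ := hA.exists_eq_fin_two
  obtain ⟨p', q', z', rfl⟩ := hB.exists_eq_fin_two
  rw [blochVector_fin_two, blochVector_fin_two]
  simp [Matrix.trace_fin_two, PiLp.inner_apply, Fin.sum_univ_three]
  ring

lemma norm_blochVector_le_re_trace {A : Matrix (Fin 2) (Fin 2) ℂ} (hA : A.PosSemidef) :
    ‖blochVector A‖ ≤ A.trace.re := by
  obtain ⟨p, q, z, rfl⟩ := hA.isHermitian.exists_eq_fin_two
  have hp : 0 ≤ p := by simpa using (Complex.nonneg_iff.1 (hA.diag_nonneg (i := 0))).1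
  have hq : 0 ≤ q := by simpa using (Complex.nonneg_iff.1 (hA.diag_nonneg (i := 1))).1
  have hdet : z.re ^ 2 + z.im ^ 2 ≤ p * q := by
    simpa [Matrix.det_fin_two, sq] using (Complex.nonneg_iff.1 hA.det_nonneg).1
  rw [blochVector_fin_two, EuclideanSpace.norm_eq, Real.sqrt_le_iff]
  refine ⟨?_, ?_⟩ <;> simp [Matrix.trace_fin_two, Fin.sum_univ_three] <;> nlinarith

def IsPOVM {ι n : Type*} [Fintype ι] [Fintype n] [DecidableEq n] (M : ι → Matrix n n ℂ) : Prop :=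
  (∀ b, (M b).PosSemidef) ∧ ∑ b, M b = 1

namespace IsPOVM

variable {ι : Type*} [Fintype ι] {M : ι → Matrix (Fin 2) (Fin 2) ℂ}

lemma sum_re_trace (hM : IsPOVM M) : ∑ b, (M b).trace.re = 2 := by
  rw [← Complex.re_sum, ← Matrix.trace_sum, hM.2]
  simp

lemma sum_blochVector (hM : IsPOVM M) : ∑ b, blochVector (M b) = 0 := by
  rw [← map_sum, hM.2, blochVector_one]

lemma sum_norm_blochVector_le (hM : IsPOVM M) : ∑ b, ‖blochVector (M b)‖ ≤ 2 :=
  hM.sum_re_trace ▸ sum_le_sum fun b _ => norm_blochVector_le_re_trace (hM.1 b)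

end IsPOVM

theorem sum_re_trace_mul_le_of_add_eq_add {ι : Type*} [Fintype ι] [Nonempty ι]
    {ρ : ι → ι → Matrix (Fin 2) (Fin 2) ℂ} (hρ_psd : ∀ i j, (ρ i j).PosSemidef)
    (hρ_tr : ∀ i j, (ρ i j).trace = 1) (hρ_add : ∀ i j k l, ρ i k + ρ j l = ρ i l + ρ j k)
    {M₁ M₂ : ι → Matrix (Fin 2) (Fin 2) ℂ} (hM₁ : IsPOVM M₁) (hM₂ : IsPOVM M₂) :
    ∑ i, ∑ j, ((ρ i j * M₁ i).trace.re + (ρ i j * M₂ j).trace.re)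
      ≤ Fintype.card ι * (2 + √2) := by
  let o := Classical.arbitrary ι
  let a i := blochVector (ρ i o)
  let b j := blochVector (ρ o j) - blochVector (ρ o o)
  have hab : ∀ i j, blochVector (ρ i j) = a i + b j := fun i j => by
    rw [← add_sub_assoc, eq_sub_iff_add_eq, ← map_add, ← map_add, hρ_add]
  have hnorm : ∀ i j, ‖a i + b j‖ ≤ 1 := fun i j => by
    simpa [← hab, hρ_tr] using norm_blochVector_le_re_trace (hρ_psd i j)
  have hterm : ∀ i j, (ρ i j * M₁ i).trace.re + (ρ i j * M₂ j).trace.re =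
      ((M₁ i).trace.re + (M₂ j).trace.re) / 2 +
        (⟪a i + b j, blochVector (M₁ i)⟫ + ⟪a i + b j, blochVector (M₂ j)⟫) / 2 := fun i j => by
    rw [re_trace_mul_eq (hρ_psd i j).1 (hM₁.1 i).1, re_trace_mul_eq (hρ_psd i j).1 (hM₂.1 j).1,
      hρ_tr, hab]
    simp only [Complex.one_re, one_mul]
    ring
  have hinner := sum_inner_add_le a b hnorm hM₁.sum_blochVector hM₂.sum_blochVector
    hM₁.sum_norm_blochVector_le hM₂.sum_norm_blochVector_le
  have htrace : ∑ i, ∑ j, ((M₁ i).trace.re + (M₂ j).trace.re) / 2 = Fintype.card ι * 2 := by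
    simp only [← sum_div, sum_add_distrib, sum_const, card_univ, nsmul_eq_mul, ← mul_sum,
      hM₁.sum_re_trace, hM₂.sum_re_trace]
    ring
  calc ∑ i, ∑ j, ((ρ i j * M₁ i).trace.re + (ρ i j * M₂ j).trace.re)
      = ∑ i, ∑ j, ((M₁ i).trace.re + (M₂ j).trace.re) / 2 +
          (∑ i, ∑ j, (⟪a i + b j, blochVector (M₁ i)⟫ + ⟪a i + b j, blochVector (M₂ j)⟫)) / 2 := by
        simp only [hterm, sum_add_distrib, sum_div, add_div]
    _ ≤ Fintype.card ι * (2 + √2) := by linarith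

/-- **No qubit advantage for the (2,3) PORAC (retrieval).** Every qubit strategy for the
`(2,3)` parity-oblivious random access code satisfying full parity-obliviousness (for the
masks `(1,1)` and `(1,2)`) has retrieval success probability at most `1/3 + 1/(3√2)`; in
particular, since `1/3 + 1/(3√2) < 2/3`, no qubit strategy exceeds the noncontextual
retrieval bound `2/3`. -/
theorem porac23_qubit_bound
    (ρ : ZMod 3 → ZMod 3 → Matrix (Fin 2) (Fin 2) ℂ)
    (hρ_psd : ∀ x₁ x₂, (ρ x₁ x₂).PosSemidef)
    (hρ_tr : ∀ x₁ x₂, (ρ x₁ x₂).trace = 1)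
    (M₁ M₂ : ZMod 3 → Matrix (Fin 2) (Fin 2) ℂ)
    (hM₁_psd : ∀ b, (M₁ b).PosSemidef) (hM₂_psd : ∀ b, (M₂ b).PosSemidef)
    (hM₁_sum : ∑ b : ZMod 3, M₁ b = 1) (hM₂_sum : ∑ b : ZMod 3, M₂ b = 1)
    (hPO₁ : ∀ k k' : ZMod 3,
      ∑ x ∈ Finset.univ.filter (fun x : ZMod 3 × ZMod 3 => x.1 + x.2 = k), ρ x.1 x.2 =
      ∑ x ∈ Finset.univ.filter (fun x : ZMod 3 × ZMod 3 => x.1 + x.2 = k'), ρ x.1 x.2)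
    (hPO₂ : ∀ k k' : ZMod 3,
      ∑ x ∈ Finset.univ.filter (fun x : ZMod 3 × ZMod 3 => x.1 + 2 * x.2 = k), ρ x.1 x.2 =
      ∑ x ∈ Finset.univ.filter (fun x : ZMod 3 × ZMod 3 => x.1 + 2 * x.2 = k'), ρ x.1 x.2) :
    (1 / 18 : ℝ) *
        ∑ x : ZMod 3 × ZMod 3,
          (((ρ x.1 x.2 * M₁ x.1).trace).re + ((ρ x.1 x.2 * M₂ x.2).trace).re)
      ≤ 1 / 3 + 1 / (3 * Real.sqrt 2) ∧
    (1 / 3 + 1 / (3 * Real.sqrt 2) : ℝ) < 2 / 3 := by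
  have hρ_add : ∀ i j k l, ρ i k + ρ j l = ρ i l + ρ j k := add_eq_add_of_sum_lines_eq
    (fun k k' => by simpa only [sum_filter_fst_add_eq (fun b => b)] using hPO₁ k k')
    (fun k k' => by simpa only [sum_filter_fst_add_eq (fun b : ZMod 3 => 2 * b)] using hPO₂ k k')
  have hbound := sum_re_trace_mul_le_of_add_eq_add hρ_psd hρ_tr hρ_add
    ⟨hM₁_psd, hM₁_sum⟩ ⟨hM₂_psd, hM₂_sum⟩
  have hsqrt : √2 ^ 2 = 2 := Real.sq_sqrt zero_le_two
  have hsqrt_lt : √2 < 2 := (Real.sqrt_lt' two_pos).2 (by norm_num)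
  have hvalue : (1 / 18 : ℝ) * (3 * (2 + √2)) = 1 / 3 + 1 / (3 * √2) := by
    field_simp
    linear_combination 9 * hsqrt
  refine ⟨?_, ?_⟩
  · rw [Fintype.sum_prod_type, ← hvalue]
    rw [ZMod.card] at hbound
    push_cast at hbound
    gcongr
  · rw [← hvalue]
    linarith
end

section
/- Let d ≥ 1 and suppose a strategy for the (2,3) parity-oblivious random exclusion code, consisting of density matrices ρ_x on ℂ^d for x ∈ (ZMod 3)² satisfying full parity-obliviousness and POVMs {M_{b|y}}_{b∈ZMod 3} on ℂ^d for y ∈ {1,2}, achieves success probability strictly greater than 2/3 + 1/(3·√2). Then d ≥ 3. -/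
/-!
In Bloch form a qubit strategy is given by vectors `r x` (states, `‖r x‖ ≤ 1/2`) and `u a`, `v b`
(effects, `∑ u = ∑ v = 0`, `∑ ‖u‖ ≤ 1`, `∑ ‖v‖ ≤ 1`), and the success probability is affine in
`∑ x, ⟪r x, u x.1⟫ + ⟪r x, v x.2⟫`. Parity-obliviousness makes the two diagonal lines of the
affine plane `(ZMod 3)²` through `x` carry a third of the total `T`, so the row and column through
`x` sum to `3 r x + T / 3`. Rescaled row sums `g a` and column sums `h b` then satisfy
`‖g a + h b‖ ≤ 1`, and the quantity to bound becomes `∑ ⟪g a, u a⟫ + ∑ ⟪h b, v b⟫ ≥ -(R + R')`,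
where the `g a` lie in a ball of radius `R` and the `h b` in one of radius `R'`. Centring these
balls at barycentres for weights maximising the weighted variance gives `R²`, `R'²` at most the
variances, and averaging `‖g a + h b‖² ≤ 1` over both weights bounds the sum of the variances
by `1`; hence `R + R' ≤ √2`. In dimension one every state is `1` and the success probability is
`2/3`.
-/

open Finset
open scoped ComplexOrder RealInnerProductSpace

section FiberSums

variable {α κ M : Type*} [Fintype α] [DecidableEq κ] [AddCommMonoid M]

/-- Parity-obliviousness for the mask `(r₁, r₂)` is the case `ℓ x = r₁ * x.1 + r₂ * x.2`. -/
def HasEqualFiberSums (ℓ : α → κ) (f : α → M) : Prop :=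
  ∀ k k', ∑ x ∈ univ.filter (fun x => ℓ x = k), f x = ∑ x ∈ univ.filter (fun x => ℓ x = k'), f x

theorem HasEqualFiberSums.card_nsmul_sum_fiber [Fintype κ] {ℓ : α → κ} {f : α → M}
    (h : HasEqualFiberSums ℓ f) (k : κ) :
    Fintype.card κ • ∑ x ∈ univ.filter (fun x => ℓ x = k), f x = ∑ x, f x := by
  rw [← sum_fiberwise univ ℓ f, ← card_univ, ← sum_const]
  exact sum_congr rfl fun k' _ => h k k'

theorem HasEqualFiberSums.map {N : Type*} [AddCommMonoid N] {ℓ : α → κ} {f : α → M}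
    (h : HasEqualFiberSums ℓ f) (φ : M →+ N) : HasEqualFiberSums ℓ (fun x => φ (f x)) := by
  intro k k'
  simp only [← map_sum, h k k']

end FiberSums

-- Every point other than `x` lies on exactly one of the four lines through `x`.
theorem card_lines_through (x y : ZMod 3 × ZMod 3) :
    (if y.1 = x.1 then 1 else 0) + (if y.2 = x.2 then 1 else 0) +
      (if y.1 + y.2 = x.1 + x.2 then 1 else 0) + (if y.1 + 2 * y.2 = x.1 + 2 * x.2 then 1 else 0) =
      (if y = x then 3 else 0) + 1 := by
  revert x y
  decide

theorem sum_lines_through {M : Type*} [AddCommMonoid M] (f : ZMod 3 × ZMod 3 → M)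
    (x : ZMod 3 × ZMod 3) :
    ∑ y ∈ univ.filter (fun y => y.1 = x.1), f y + ∑ y ∈ univ.filter (fun y => y.2 = x.2), f y +
      ∑ y ∈ univ.filter (fun y => y.1 + y.2 = x.1 + x.2), f y +
      ∑ y ∈ univ.filter (fun y => y.1 + 2 * y.2 = x.1 + 2 * x.2), f y =
      3 • f x + ∑ y, f y := by
  simp only [sum_filter, ← sum_add_distrib]
  rw [← Fintype.sum_ite_eq' x (fun y => 3 • f y), ← sum_add_distrib]
  refine sum_congr rfl fun y _ => ?_
  have := congrArg (· • f y) (card_lines_through x y)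
  simpa only [add_smul, ite_smul, one_smul, zero_smul] using this

theorem HasEqualFiberSums.sum_fiber_fst_add_sum_fiber_snd {V : Type*} [AddCommGroup V]
    [Module ℝ V] {f : ZMod 3 × ZMod 3 → V}
    (h₁ : HasEqualFiberSums (fun x : ZMod 3 × ZMod 3 => x.1 + x.2) f)
    (h₂ : HasEqualFiberSums (fun x : ZMod 3 × ZMod 3 => x.1 + 2 * x.2) f) (x : ZMod 3 × ZMod 3) :
    ∑ y ∈ univ.filter (fun y => y.1 = x.1), f y + ∑ y ∈ univ.filter (fun y => y.2 = x.2), f y =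
      (3 : ℝ) • f x + (1 / 3 : ℝ) • ∑ y, f y := by
  have hlines := sum_lines_through f x
  have hd := h₁.card_nsmul_sum_fiber (x.1 + x.2)
  have he := h₂.card_nsmul_sum_fiber (x.1 + 2 * x.2)
  rw [ZMod.card] at hd he
  simp only [← Nat.cast_smul_eq_nsmul ℝ, Nat.cast_ofNat] at hlines hd he
  linear_combination (norm := module) hlines - (1 / 3 : ℝ) • hd - (1 / 3 : ℝ) • he

theorem sum_prod_fst_add_snd {α β : Type*} [Fintype α] [Fintype β] (F : α → ℝ) (G : β → ℝ) :
    ∑ x : α × β, (F x.1 + G x.2) = Fintype.card β * ∑ a, F a + Fintype.card α * ∑ b, G b := by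
  simp only [sum_add_distrib, Fintype.sum_prod_type, sum_const, card_univ, nsmul_eq_mul, mul_sum]

section InnerProductSpace

variable {E : Type*} [NormedAddCommGroup E] [InnerProductSpace ℝ E]
variable {ι : Type*} [Fintype ι]

noncomputable def weightedVariance (w : ι → ℝ) (g : ι → E) : ℝ :=
  ∑ i, w i * ‖g i - ∑ j, w j • g j‖ ^ 2

theorem sum_mul_norm_sub_sq_eq {w : ι → ℝ} (hw : ∑ i, w i = 1) (g : ι → E) (x : E) :
    ∑ i, w i * ‖g i - x‖ ^ 2 = weightedVariance w g + ‖∑ j, w j • g j - x‖ ^ 2 := by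
  set c := ∑ j, w j • g j
  have hcentred : ∑ i, w i * ⟪g i - c, c - x⟫ = 0 := by
    have : ∑ i, w i • (g i - c) = 0 := by
      rw [sum_congr rfl fun i _ => smul_sub (w i) (g i) c, sum_sub_distrib, ← sum_smul, hw,
        one_smul, sub_self]
    rw [← inner_zero_left (c - x), ← this, sum_inner]
    exact sum_congr rfl fun i _ => (real_inner_smul_left _ _ _).symm
  calc ∑ i, w i * ‖g i - x‖ ^ 2
      = ∑ i, (w i * ‖g i - c‖ ^ 2 + 2 * (w i * ⟪g i - c, c - x⟫) + w i * ‖c - x‖ ^ 2) := by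
        refine sum_congr rfl fun i _ => ?_
        rw [← sub_add_sub_cancel (g i) c x, norm_add_sq_real]
        ring
    _ = _ := by
        rw [sum_add_distrib, sum_add_distrib, ← mul_sum, hcentred, ← sum_mul, hw]
        simp only [weightedVariance, c]
        ring

theorem weightedVariance_segment_single [DecidableEq ι] {w : ι → ℝ} (hw : ∑ i, w i = 1)
    (g : ι → E) (j : ι) (t : ℝ) :
    weightedVariance ((1 - t) • w + t • Pi.single j 1) g =
      (1 - t) * weightedVariance w g + t * (1 - t) * ‖g j - ∑ k, w k • g k‖ ^ 2 := by
  set c := ∑ k, w k • g k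
  set w' := (1 - t) • w + t • Pi.single j (1 : ℝ)
  have hc' : ∑ k, w' k • g k = c + t • (g j - c) := by
    simp only [w', Pi.add_apply, Pi.smul_apply, smul_eq_mul, add_smul, mul_smul, sum_add_distrib,
      ← smul_sum, Pi.single_apply, ite_smul, zero_smul, mul_ite, mul_one, mul_zero,
      sum_ite_eq', mem_univ, if_true, c]
    module
  have hsplit : weightedVariance w' g =
      (1 - t) * ∑ i, w i * ‖g i - (c + t • (g j - c))‖ ^ 2 +
        t * ‖g j - (c + t • (g j - c))‖ ^ 2 := by
    rw [weightedVariance, hc']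
    simp only [w', Pi.add_apply, Pi.smul_apply, smul_eq_mul, add_mul,
      sum_add_distrib, mul_sum, mul_assoc, Pi.single_apply, mul_ite, mul_one, mul_zero, ite_mul,
      zero_mul, sum_ite_eq', mem_univ, if_true]
  rw [hsplit, sum_mul_norm_sub_sq_eq hw, show c - (c + t • (g j - c)) = (-t) • (g j - c) by module,
    show g j - (c + t • (g j - c)) = (1 - t) • (g j - c) by module, norm_smul, norm_smul,
    Real.norm_eq_abs, Real.norm_eq_abs, mul_pow, mul_pow, sq_abs, sq_abs]
  ring

theorem exists_norm_sub_sq_le_weightedVariance [Nonempty ι] (g : ι → E) :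
    ∃ w ∈ stdSimplex ℝ ι, ∀ j, ‖g j - ∑ k, w k • g k‖ ^ 2 ≤ weightedVariance w g := by
  classical
  obtain ⟨w, hw, hmax⟩ := (isCompact_stdSimplex ℝ ι).exists_isMaxOn
    ⟨_, single_mem_stdSimplex ℝ (Classical.arbitrary ι)⟩ (f := (weightedVariance · g))
    (by unfold weightedVariance; fun_prop)
  refine ⟨w, hw, fun j => ?_⟩
  by_contra! hlt
  -- Shifting weight `t` onto `j` would raise the variance by `t * (D - F) - t ^ 2 * D`.
  set D := ‖g j - ∑ k, w k • g k‖ ^ 2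
  set F := weightedVariance w g
  have hF : 0 ≤ F := sum_nonneg fun i _ => mul_nonneg (hw.1 i) (sq_nonneg _)
  have hD : 0 < D := hF.trans_lt hlt
  set t := (D - F) / (2 * D) with ht
  have ht0 : 0 < t := div_pos (by linarith) (by linarith)
  have htD : t * D = (D - F) / 2 := by rw [ht]; field_simp
  have ht1 : t ≤ 1 := by nlinarith
  have hle : weightedVariance ((1 - t) • w + t • Pi.single j 1) g ≤ F :=
    hmax (convex_stdSimplex ℝ ι hw (single_mem_stdSimplex ℝ j) (sub_nonneg.2 ht1) ht0.le
      (sub_add_cancel 1 t))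
  rw [weightedVariance_segment_single hw.2] at hle
  nlinarith

theorem neg_mul_sum_norm_le_sum_inner {g u : ι → E} {c : E} {R : ℝ}
    (hg : ∀ i, ‖g i - c‖ ≤ R) (hu : ∑ i, u i = 0) :
    -(R * ∑ i, ‖u i‖) ≤ ∑ i, ⟪g i, u i⟫ := by
  have hshift : ∑ i, ⟪g i, u i⟫ = ∑ i, ⟪g i - c, u i⟫ := by
    simp only [inner_sub_left, sum_sub_distrib, ← inner_sum, hu, inner_zero_right, sub_zero]
  rw [hshift, mul_sum, ← sum_neg_distrib]
  refine sum_le_sum fun i _ => ?_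
  calc -(R * ‖u i‖) ≤ -(‖g i - c‖ * ‖u i‖) := by gcongr; exact hg i
    _ ≤ ⟪g i - c, u i⟫ := neg_le_of_abs_le (abs_real_inner_le_norm _ _)

variable {κ : Type*} [Fintype κ]

theorem neg_sqrt_two_le_sum_inner_add_sum_inner [Nonempty ι] [Nonempty κ]
    {g u : ι → E} {h v : κ → E} (hgh : ∀ a b, ‖g a + h b‖ ≤ 1)
    (hu : ∑ a, u a = 0) (hv : ∑ b, v b = 0) (hu₁ : ∑ a, ‖u a‖ ≤ 1) (hv₁ : ∑ b, ‖v b‖ ≤ 1) :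
    -√2 ≤ ∑ a, ⟪g a, u a⟫ + ∑ b, ⟪h b, v b⟫ := by
  obtain ⟨w, hw, hgw⟩ := exists_norm_sub_sq_le_weightedVariance g
  obtain ⟨w', hw', hhw'⟩ := exists_norm_sub_sq_le_weightedVariance h
  set A := weightedVariance w g
  set B := weightedVariance w' h
  have hA : 0 ≤ A := sum_nonneg fun i _ => mul_nonneg (hw.1 i) (sq_nonneg _)
  have hB : 0 ≤ B := sum_nonneg fun i _ => mul_nonneg (hw'.1 i) (sq_nonneg _)
  have hAB : A + B ≤ 1 := by
    have hmean : ∑ a, w a * ∑ b, w' b * ‖h b - -g a‖ ^ 2 ≤ 1 := by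
      calc ∑ a, w a * ∑ b, w' b * ‖h b - -g a‖ ^ 2 ≤ ∑ a, w a * ∑ b, w' b * 1 := by
            gcongr with a _ b _
            · exact hw.1 a
            · exact hw'.1 b
            · rw [sub_neg_eq_add, add_comm]
              exact pow_le_one₀ (norm_nonneg _) (hgh a b)
        _ = 1 := by simp only [mul_one, hw'.2, hw.2]
    have hinner : ∀ a, ∑ b, w' b * ‖h b - -g a‖ ^ 2 = B + ‖g a - -∑ j, w' j • h j‖ ^ 2 := by
      intro a
      rw [sum_mul_norm_sub_sq_eq hw'.2, sub_neg_eq_add, sub_neg_eq_add, add_comm (g a)]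
    simp only [hinner, mul_add, sum_add_distrib, ← sum_mul, hw.2, one_mul] at hmean
    rw [sum_mul_norm_sub_sq_eq hw.2] at hmean
    nlinarith [sq_nonneg ‖∑ j, w j • g j - -∑ j, w' j • h j‖]
  have hg := neg_mul_sum_norm_le_sum_inner (R := √A) (fun a => Real.le_sqrt_of_sq_le (hgw a)) hu
  have hh := neg_mul_sum_norm_le_sum_inner (R := √B) (fun b => Real.le_sqrt_of_sq_le (hhw' b)) hv
  have hsqrt : √A + √B ≤ √2 := by
    rw [Real.le_sqrt (by positivity) zero_le_two]
    nlinarith [Real.sq_sqrt hA, Real.sq_sqrt hB, sq_nonneg (√A - √B)]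
  nlinarith [Real.sqrt_nonneg A, Real.sqrt_nonneg B]

theorem sum_inner_sum_fiber {α : Type*} [Fintype α] [DecidableEq κ] (ℓ : α → κ)
    (r : α → E) (u : κ → E) :
    ∑ k, ⟪∑ y ∈ univ.filter (fun y => ℓ y = k), r y, u k⟫ = ∑ y, ⟪r y, u (ℓ y)⟫ := by
  rw [← sum_fiberwise univ ℓ]
  refine sum_congr rfl fun k _ => ?_
  rw [sum_inner]
  exact sum_congr rfl fun y hy => by rw [(mem_filter.1 hy).2]

theorem neg_le_sum_inner_of_hasEqualFiberSums {r : ZMod 3 × ZMod 3 → E}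
    (hr : ∀ x, ‖r x‖ ≤ 1 / 2)
    (h₁ : HasEqualFiberSums (fun x : ZMod 3 × ZMod 3 => x.1 + x.2) r)
    (h₂ : HasEqualFiberSums (fun x : ZMod 3 × ZMod 3 => x.1 + 2 * x.2) r)
    {u v : ZMod 3 → E} (hu : ∑ a, u a = 0) (hv : ∑ b, v b = 0)
    (hu₁ : ∑ a, ‖u a‖ ≤ 1) (hv₁ : ∑ b, ‖v b‖ ≤ 1) :
    -(3 * √2 / 2) ≤ ∑ x, (⟪r x, u x.1⟫ + ⟪r x, v x.2⟫) := by
  set T := ∑ y, r y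
  let G (ℓ : ZMod 3 × ZMod 3 → ZMod 3) (a : ZMod 3) : E :=
    (2 / 3 : ℝ) • ∑ y ∈ univ.filter (fun y => ℓ y = a), r y - (1 / 9 : ℝ) • T
  have hG : ∀ a b, ‖G Prod.fst a + G Prod.snd b‖ ≤ 1 := by
    intro a b
    have hrow_col := h₁.sum_fiber_fst_add_sum_fiber_snd h₂ (a, b)
    have : G Prod.fst a + G Prod.snd b = (2 : ℝ) • r (a, b) := by
      linear_combination (norm := module) (2 / 3 : ℝ) • hrow_col
    rw [this, norm_smul, Real.norm_two]
    linarith [hr (a, b)]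
  have hsum_inner : ∀ (ℓ : ZMod 3 × ZMod 3 → ZMod 3) (u : ZMod 3 → E), ∑ a, u a = 0 →
      ∑ a, ⟪G ℓ a, u a⟫ = 2 / 3 * ∑ y, ⟪r y, u (ℓ y)⟫ := by
    intro ℓ u hu
    simp only [G, inner_sub_left, real_inner_smul_left, sum_sub_distrib, ← mul_sum, ← inner_sum,
      hu, inner_zero_right, mul_zero, sub_zero, sum_inner_sum_fiber]
  have := neg_sqrt_two_le_sum_inner_add_sum_inner hG hu hv hu₁ hv₁
  rw [hsum_inner Prod.fst u hu, hsum_inner Prod.snd v hv] at this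
  rw [sum_add_distrib]
  linarith

end InnerProductSpace

namespace Matrix

theorem re_trace_sum_of_sum_eq_one {ι : Type*} [Fintype ι] {d : ℕ}
    {M : ι → Matrix (Fin d) (Fin d) ℂ} (hM : ∑ b, M b = 1) : ∑ b, (M b).trace.re = d := by
  rw [← Complex.re_sum, ← trace_sum, hM, trace_one, Fintype.card_fin, Complex.natCast_re]

theorem sum_filter_ne_re_trace_mul {ι : Type*} [Fintype ι] [DecidableEq ι] {d : ℕ}
    {ρ : Matrix (Fin d) (Fin d) ℂ} (hρ : ρ.trace = 1) {M : ι → Matrix (Fin d) (Fin d) ℂ}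
    (hM : ∑ b, M b = 1) (a : ι) :
    ∑ b ∈ univ.filter (fun b => b ≠ a), (ρ * M b).trace.re = 1 - (ρ * M a).trace.re := by
  rw [filter_ne' univ a, sum_erase_eq_sub (mem_univ a), ← Complex.re_sum, ← trace_sum,
    ← mul_sum, hM, mul_one, hρ, Complex.one_re]

theorem trace_mul_fin_one (X Y : Matrix (Fin 1) (Fin 1) ℂ) :
    (X * Y).trace = X.trace * Y.trace := by
  simp [trace_fin_one, mul_apply]

/-- Half the usual Bloch vector: the coordinates of `X - (X.trace / 2) • 1` in the Pauli basis,
with the sign of the `σ_y` coordinate flipped. -/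
noncomputable def blochVector : Matrix (Fin 2) (Fin 2) ℂ →+ EuclideanSpace ℝ (Fin 3) where
  toFun X := !₂[(X 0 1).re, (X 0 1).im, ((X 0 0).re - (X 1 1).re) / 2]
  map_zero' := by ext i; fin_cases i <;> simp
  map_add' X Y := by ext i; fin_cases i <;> simp [add_sub_add_comm, add_div]

theorem blochVector_one : blochVector 1 = 0 := by
  ext i; fin_cases i <;> simp [blochVector]

theorem IsHermitian.fin_two_entries {X : Matrix (Fin 2) (Fin 2) ℂ} (hX : X.IsHermitian) :
    (X 0 0).im = 0 ∧ (X 1 1).im = 0 ∧ X 1 0 = star (X 0 1) :=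
  ⟨Complex.conj_eq_iff_im.1 (hX.apply 0 0), Complex.conj_eq_iff_im.1 (hX.apply 1 1),
    (hX.apply 1 0).symm⟩

theorem IsHermitian.re_trace_mul_fin_two {X Y : Matrix (Fin 2) (Fin 2) ℂ} (hX : X.IsHermitian)
    (hY : Y.IsHermitian) :
    (X * Y).trace.re = X.trace.re * Y.trace.re / 2 + 2 * ⟪blochVector X, blochVector Y⟫ := by
  obtain ⟨hX₀, hX₁, hX₂⟩ := hX.fin_two_entries
  obtain ⟨hY₀, hY₁, hY₂⟩ := hY.fin_two_entries
  simp only [blochVector, AddMonoidHom.coe_mk, ZeroHom.coe_mk, PiLp.inner_apply,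
    Fin.sum_univ_three, trace_fin_two, mul_apply, Fin.sum_univ_two, hX₂, hY₂]
  simp only [RCLike.star_def, Complex.add_re, Complex.mul_re, hX₀, hY₀, hX₁, hY₁, mul_zero,
    sub_zero, Complex.conj_re, Complex.conj_im, mul_neg, sub_neg_eq_add, neg_mul, cons_val_zero,
    cons_val_one, cons_val, RCLike.inner_apply, Real.ringHom_apply, map_div₀]
  ring

theorem PosSemidef.norm_blochVector_le {X : Matrix (Fin 2) (Fin 2) ℂ} (hX : X.PosSemidef) :
    ‖blochVector X‖ ≤ X.trace.re / 2 := by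
  obtain ⟨hX₀, hX₁, hX₂⟩ := hX.isHermitian.fin_two_entries
  have hdet : 0 ≤ X.det.re := (Complex.nonneg_iff.1 hX.det_nonneg).1
  have htr : 0 ≤ X.trace.re := (Complex.nonneg_iff.1 hX.trace_nonneg).1
  rw [det_fin_two, hX₂] at hdet
  rw [← pow_le_pow_iff_left₀ (norm_nonneg _) (by positivity) two_ne_zero,
    EuclideanSpace.real_norm_sq_eq]
  simp only [blochVector, AddMonoidHom.coe_mk, ZeroHom.coe_mk, Fin.sum_univ_three, trace_fin_two]
  simp only [RCLike.star_def, Complex.sub_re, Complex.add_re, Complex.mul_re, hX₀, hX₁, mul_zero,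
    sub_zero, Complex.conj_re, Complex.conj_im, mul_neg, sub_neg_eq_add, sub_nonneg, cons_val_zero,
    cons_val_one, cons_val] at hdet ⊢
  nlinarith

theorem sum_blochVector_of_sum_eq_one {ι : Type*} [Fintype ι]
    {M : ι → Matrix (Fin 2) (Fin 2) ℂ} (hM : ∑ b, M b = 1) : ∑ b, blochVector (M b) = 0 := by
  rw [← map_sum, hM, blochVector_one]

theorem sum_norm_blochVector_le_one {ι : Type*} [Fintype ι]
    {M : ι → Matrix (Fin 2) (Fin 2) ℂ} (hM_psd : ∀ b, (M b).PosSemidef) (hM : ∑ b, M b = 1) :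
    ∑ b, ‖blochVector (M b)‖ ≤ 1 :=
  calc ∑ b, ‖blochVector (M b)‖ ≤ ∑ b, (M b).trace.re / 2 :=
        sum_le_sum fun b _ => (hM_psd b).norm_blochVector_le
    _ = 1 := by rw [← sum_div, re_trace_sum_of_sum_eq_one hM]; norm_num

end Matrix

theorem sum_re_trace_mul_of_fin_one {ρ : ZMod 3 → ZMod 3 → Matrix (Fin 1) (Fin 1) ℂ}
    (hρ_tr : ∀ x₁ x₂, (ρ x₁ x₂).trace = 1) {M₁ M₂ : ZMod 3 → Matrix (Fin 1) (Fin 1) ℂ}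
    (hM₁_sum : ∑ b, M₁ b = 1) (hM₂_sum : ∑ b, M₂ b = 1) :
    ∑ x : ZMod 3 × ZMod 3, ((ρ x.1 x.2 * M₁ x.1).trace.re + (ρ x.1 x.2 * M₂ x.2).trace.re) = 6 := by
  simp only [Matrix.trace_mul_fin_one, hρ_tr, one_mul]
  rw [sum_prod_fst_add_snd (fun a => (M₁ a).trace.re) (fun b => (M₂ b).trace.re),
    Matrix.re_trace_sum_of_sum_eq_one hM₁_sum, Matrix.re_trace_sum_of_sum_eq_one hM₂_sum, ZMod.card]
  norm_num

theorem six_sub_three_mul_sqrt_two_le_sum_re_trace_mul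
    {ρ : ZMod 3 → ZMod 3 → Matrix (Fin 2) (Fin 2) ℂ}
    (hρ_psd : ∀ x₁ x₂, (ρ x₁ x₂).PosSemidef) (hρ_tr : ∀ x₁ x₂, (ρ x₁ x₂).trace = 1)
    {M₁ M₂ : ZMod 3 → Matrix (Fin 2) (Fin 2) ℂ}
    (hM₁_psd : ∀ b, (M₁ b).PosSemidef) (hM₂_psd : ∀ b, (M₂ b).PosSemidef)
    (hM₁_sum : ∑ b, M₁ b = 1) (hM₂_sum : ∑ b, M₂ b = 1)
    (hPO₁ : HasEqualFiberSums (fun x : ZMod 3 × ZMod 3 => x.1 + x.2) (fun x => ρ x.1 x.2))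
    (hPO₂ : HasEqualFiberSums (fun x : ZMod 3 × ZMod 3 => x.1 + 2 * x.2) (fun x => ρ x.1 x.2)) :
    6 - 3 * √2 ≤
      ∑ x : ZMod 3 × ZMod 3, ((ρ x.1 x.2 * M₁ x.1).trace.re + (ρ x.1 x.2 * M₂ x.2).trace.re) := by
  set r := fun x : ZMod 3 × ZMod 3 => Matrix.blochVector (ρ x.1 x.2)
  have hr : ∀ x, ‖r x‖ ≤ 1 / 2 := fun x => by
    simpa [hρ_tr] using (hρ_psd x.1 x.2).norm_blochVector_le
  have hbound := neg_le_sum_inner_of_hasEqualFiberSums hr (hPO₁.map _) (hPO₂.map _)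
    (Matrix.sum_blochVector_of_sum_eq_one hM₁_sum) (Matrix.sum_blochVector_of_sum_eq_one hM₂_sum)
    (Matrix.sum_norm_blochVector_le_one hM₁_psd hM₁_sum)
    (Matrix.sum_norm_blochVector_le_one hM₂_psd hM₂_sum)
  have hsplit : ∀ x : ZMod 3 × ZMod 3,
      (ρ x.1 x.2 * M₁ x.1).trace.re + (ρ x.1 x.2 * M₂ x.2).trace.re =
        ((M₁ x.1).trace.re / 2 + (M₂ x.2).trace.re / 2) +
          2 * (⟪r x, Matrix.blochVector (M₁ x.1)⟫ + ⟪r x, Matrix.blochVector (M₂ x.2)⟫) := by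
    intro x
    rw [(hρ_psd x.1 x.2).isHermitian.re_trace_mul_fin_two (hM₁_psd _).isHermitian,
      (hρ_psd x.1 x.2).isHermitian.re_trace_mul_fin_two (hM₂_psd _).isHermitian, hρ_tr,
      Complex.one_re]
    ring
  rw [sum_congr rfl fun x _ => hsplit x, sum_add_distrib, ← mul_sum,
    sum_prod_fst_add_snd (fun a => (M₁ a).trace.re / 2) (fun b => (M₂ b).trace.re / 2),
    ← sum_div, ← sum_div, Matrix.re_trace_sum_of_sum_eq_one hM₁_sum,
    Matrix.re_trace_sum_of_sum_eq_one hM₂_sum, ZMod.card]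
  norm_num
  linarith

theorem porec23_dimension_witness_general
    (d : ℕ)
    (ρ : ZMod 3 → ZMod 3 → Matrix (Fin d) (Fin d) ℂ)
    (hρ_psd : ∀ x₁ x₂, (ρ x₁ x₂).PosSemidef)
    (hρ_tr : ∀ x₁ x₂, (ρ x₁ x₂).trace = 1)
    (M₁ M₂ : ZMod 3 → Matrix (Fin d) (Fin d) ℂ)
    (hM₁_psd : ∀ b, (M₁ b).PosSemidef) (hM₂_psd : ∀ b, (M₂ b).PosSemidef)
    (hM₁_sum : ∑ b : ZMod 3, M₁ b = 1) (hM₂_sum : ∑ b : ZMod 3, M₂ b = 1)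
    (hPO₁ : ∀ k k' : ZMod 3,
      ∑ x ∈ Finset.univ.filter (fun x : ZMod 3 × ZMod 3 => x.1 + x.2 = k), ρ x.1 x.2 =
      ∑ x ∈ Finset.univ.filter (fun x : ZMod 3 × ZMod 3 => x.1 + x.2 = k'), ρ x.1 x.2)
    (hPO₂ : ∀ k k' : ZMod 3,
      ∑ x ∈ Finset.univ.filter (fun x : ZMod 3 × ZMod 3 => x.1 + 2 * x.2 = k), ρ x.1 x.2 =
      ∑ x ∈ Finset.univ.filter (fun x : ZMod 3 × ZMod 3 => x.1 + 2 * x.2 = k'), ρ x.1 x.2)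
    (hQ : 2 / 3 + 1 / (3 * Real.sqrt 2) <
      (1 / 18 : ℝ) *
        ∑ x : ZMod 3 × ZMod 3,
          ((∑ b ∈ Finset.univ.filter (fun b => b ≠ x.1), ((ρ x.1 x.2 * M₁ b).trace).re) +
           (∑ b ∈ Finset.univ.filter (fun b => b ≠ x.2), ((ρ x.1 x.2 * M₂ b).trace).re))) :
    3 ≤ d := by
  by_contra! hd
  have hguess : 6 - 3 * √2 ≤
      ∑ x : ZMod 3 × ZMod 3, ((ρ x.1 x.2 * M₁ x.1).trace.re + (ρ x.1 x.2 * M₂ x.2).trace.re) := by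
    interval_cases d
    · simpa [Matrix.trace_fin_zero] using hρ_tr 0 0
    · rw [sum_re_trace_mul_of_fin_one hρ_tr hM₁_sum hM₂_sum]
      linarith [Real.sqrt_nonneg 2]
    · exact six_sub_three_mul_sqrt_two_le_sum_re_trace_mul hρ_psd hρ_tr hM₁_psd hM₂_psd
        hM₁_sum hM₂_sum hPO₁ hPO₂
  simp only [Matrix.sum_filter_ne_re_trace_mul (hρ_tr _ _) hM₁_sum,
    Matrix.sum_filter_ne_re_trace_mul (hρ_tr _ _) hM₂_sum] at hQ
  have hsqrt : 1 / (3 * √2) = √2 / 6 := by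
    field_simp
    norm_num
  rw [hsqrt, sum_add_distrib, sum_sub_distrib, sum_sub_distrib, sum_const, card_univ,
    Fintype.card_prod, ZMod.card] at hQ
  rw [sum_add_distrib] at hguess
  norm_num at hQ
  linarith

/-- **Semi-device-independent dimension witness.** If a strategy for the `(2,3)`
parity-oblivious random exclusion code, consisting of density matrices on `ℂ^d` satisfying
full parity-obliviousness and POVMs, achieves POREC success probability strictly greater
than `2/3 + 1/(3√2)`, then `d ≥ 3`. -/
theorem porec23_dimension_witness
    (d : ℕ) (hd : 1 ≤ d)
    (ρ : ZMod 3 → ZMod 3 → Matrix (Fin d) (Fin d) ℂ)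
    (hρ_psd : ∀ x₁ x₂, (ρ x₁ x₂).PosSemidef)
    (hρ_tr : ∀ x₁ x₂, (ρ x₁ x₂).trace = 1)
    (M₁ M₂ : ZMod 3 → Matrix (Fin d) (Fin d) ℂ)
    (hM₁_psd : ∀ b, (M₁ b).PosSemidef) (hM₂_psd : ∀ b, (M₂ b).PosSemidef)
    (hM₁_sum : ∑ b : ZMod 3, M₁ b = 1) (hM₂_sum : ∑ b : ZMod 3, M₂ b = 1)
    (hPO₁ : ∀ k k' : ZMod 3,
      ∑ x ∈ Finset.univ.filter (fun x : ZMod 3 × ZMod 3 => x.1 + x.2 = k), ρ x.1 x.2 =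
      ∑ x ∈ Finset.univ.filter (fun x : ZMod 3 × ZMod 3 => x.1 + x.2 = k'), ρ x.1 x.2)
    (hPO₂ : ∀ k k' : ZMod 3,
      ∑ x ∈ Finset.univ.filter (fun x : ZMod 3 × ZMod 3 => x.1 + 2 * x.2 = k), ρ x.1 x.2 =
      ∑ x ∈ Finset.univ.filter (fun x : ZMod 3 × ZMod 3 => x.1 + 2 * x.2 = k'), ρ x.1 x.2)
    (hQ : 2 / 3 + 1 / (3 * Real.sqrt 2) <
      (1 / 18 : ℝ) *
        ∑ x : ZMod 3 × ZMod 3,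
          ((∑ b ∈ Finset.univ.filter (fun b => b ≠ x.1), ((ρ x.1 x.2 * M₁ b).trace).re) +
           (∑ b ∈ Finset.univ.filter (fun b => b ≠ x.2), ((ρ x.1 x.2 * M₂ b).trace).re))) :
    3 ≤ d :=
  porec23_dimension_witness_general d ρ hρ_psd hρ_tr M₁ M₂ hM₁_psd hM₂_psd hM₁_sum hM₂_sum hPO₁ hPO₂
    hQ
end
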